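/- arXiv:2008.12698 — 5 statements merged into one kernel-verified Lean document; each statement's English description precedes it below -/
import Mathlib

section
/- Let X be a locally compact Hausdorff topological space and let E be a linear subspace of the continuous real-valued functions on X that is an adapted space. Then for a linear functional L : E → ℝ the following are equivalent: (i) L(f) ≥ 0 for all f ∈ E₊; (ii) there exists a Radon measure μ on X such that every f ∈ E is μ-integrable and L(f) = ∫_X f dμ for all f ∈ E. -/
open MeasureTheory

/-- A Radon measure: finite on compact sets and inner regular with respect to compact sets. -/
def IsRadon {X : Type*} [TopologicalSpace X] [MeasurableSpace X] (μ : Measure X) : Prop :=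
  IsFiniteMeasureOnCompacts μ ∧ μ.InnerRegular

/-!
By the M. Riesz extension theorem, a positive `L` extends to a positive functional on
`E + C_c(X)`: by (i) and (ii), every element of that space is bounded below by an element
of `-E`. The Riesz–Markov–Kakutani theorem represents its restriction `Λ` to `C_c(X)` by a
regular measure `μ`. Such a `μ` need only be inner regular on open sets, so we replace it by its
inner regularization `ν A = ⨆ K compact, μ (A ∩ K)`, which agrees with `μ` on compact sets and
is Radon. For `u ∈ E₊`, `∫ u dν` is the supremum of `∫ φ dμ = Λ φ` over compactly supported
cutoffs `0 ≤ φ ≤ u`. Each such `Λ φ` is at most `L u`, and by (iii) they approach `L u`, since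
`u - ε g` lies below a cutoff of `u`. Finally (i) extends `∫ u dν = L u` from `E₊` to `E`.
-/

open Set TopologicalSpace CompactlySupported
open scoped ENNReal

namespace MeasureTheory

namespace Measure

variable {X : Type*} [TopologicalSpace X] [T2Space X] [MeasurableSpace X]
  [OpensMeasurableSpace X] (μ : Measure X)

noncomputable def innerRegularization : Measure X :=
  Measure.ofMeasurable (fun A _ => ⨆ K : Compacts X, μ (A ∩ K)) (by simp)
    (fun A hA hd => by
      have hK : ∀ K : Compacts X, μ ((⋃ i, A i) ∩ K) = ∑' i, μ (A i ∩ K) := fun K => by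
        rw [iUnion_inter]
        exact measure_iUnion (fun i j hij => (hd hij).mono inter_subset_left inter_subset_left)
          fun i => (hA i).inter K.isCompact.measurableSet
      simp only [hK, ENNReal.tsum_eq_iSup_sum]
      refine le_antisymm (iSup_le fun K => iSup_mono fun s => Finset.sum_le_sum fun i _ =>
        le_iSup (fun K : Compacts X => μ (A i ∩ K)) K) (iSup_le fun s => ?_)
      rw [ENNReal.finsetSum_iSup_of_monotone (f := fun i (K : Compacts X) => μ (A i ∩ K))
        fun i K₁ K₂ hK => measure_mono (inter_subset_inter_right _ hK)]
      exact iSup_mono fun K => le_iSup (fun s => ∑ i ∈ s, μ (A i ∩ K)) s)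

theorem innerRegularization_apply {A : Set X} (hA : MeasurableSet A) :
    μ.innerRegularization A = ⨆ K : Compacts X, μ (A ∩ K) :=
  ofMeasurable_apply A hA

theorem innerRegularization_apply_of_isCompact {K : Set X} (hK : IsCompact K) :
    μ.innerRegularization K = μ K := by
  rw [innerRegularization_apply μ hK.measurableSet]
  exact le_antisymm (iSup_le fun K' => measure_mono inter_subset_left)
    (le_iSup_of_le ⟨K, hK⟩ (by simp))

theorem restrict_le_innerRegularization (K : Compacts X) :
    μ.restrict K ≤ μ.innerRegularization :=
  Measure.le_intro fun A hA _ => by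
    rw [restrict_apply hA, innerRegularization_apply μ hA]
    exact le_iSup (fun K : Compacts X => μ (A ∩ K)) K

theorem lintegral_innerRegularization {f : X → ℝ≥0∞} (hf : Measurable f) :
    ∫⁻ x, f x ∂μ.innerRegularization = ⨆ K : Compacts X, ∫⁻ x in K, f x ∂μ := by
  refine le_antisymm ?_
    (iSup_le fun K => lintegral_mono' (restrict_le_innerRegularization μ K) le_rfl)
  rw [lintegral_eq_iSup_eapprox_lintegral hf]
  refine iSup_le fun n => ?_
  set s := SimpleFunc.eapprox f n
  calc s.lintegral μ.innerRegularization
      = ⨆ K : Compacts X, ∑ y ∈ s.range, y * μ (s ⁻¹' {y} ∩ K) := by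
        simp only [SimpleFunc.lintegral, innerRegularization_apply μ (s.measurableSet_preimage _),
          ENNReal.mul_iSup]
        exact ENNReal.finsetSum_iSup_of_monotone fun y K₁ K₂ hK => by gcongr
    _ = ⨆ K : Compacts X, s.lintegral (μ.restrict K) := by
        simp only [SimpleFunc.lintegral, restrict_apply (s.measurableSet_preimage _)]
    _ ≤ ⨆ K : Compacts X, ∫⁻ x in K, f x ∂μ := iSup_mono fun K => by
        rw [← SimpleFunc.lintegral_eq_lintegral]
        exact lintegral_mono fun x => (le_iSup (fun n => SimpleFunc.eapprox f n x) n).trans_eq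
          (SimpleFunc.iSup_eapprox_apply hf x)

instance [IsFiniteMeasureOnCompacts μ] : IsFiniteMeasureOnCompacts μ.innerRegularization :=
  ⟨fun K hK => by rw [innerRegularization_apply_of_isCompact μ hK]; exact hK.measure_lt_top⟩

instance [IsFiniteMeasureOnCompacts μ] [InnerRegularCompactLTTop μ] :
    μ.innerRegularization.InnerRegular := by
  refine ⟨fun A hA r hr => ?_⟩
  rw [innerRegularization_apply μ hA, lt_iSup_iff] at hr
  obtain ⟨K, hrK⟩ := hr
  have hfin : μ (A ∩ K) ≠ ∞ :=
    (measure_mono inter_subset_right |>.trans_lt K.isCompact.measure_lt_top).ne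
  obtain ⟨K', hK'A, hK', hrK'⟩ :=
    InnerRegularCompactLTTop.innerRegular ⟨hA.inter K.isCompact.measurableSet, hfin⟩ r hrK
  exact ⟨K', hK'A.trans inter_subset_left, hK',
    by rwa [innerRegularization_apply_of_isCompact μ hK']⟩

end Measure

theorem integrable_and_integral_eq_of_lintegral_eq {Y : Type*} [MeasurableSpace Y]
    {μ : Measure Y} {f : Y → ℝ} (hf : AEStronglyMeasurable f μ) (hf0 : ∀ x, 0 ≤ f x) {r : ℝ}
    (hr : 0 ≤ r) (h : ∫⁻ x, ENNReal.ofReal (f x) ∂μ = ENNReal.ofReal r) :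
    Integrable f μ ∧ ∫ x, f x ∂μ = r := by
  refine ⟨(lintegral_ofReal_ne_top_iff_integrable hf (.of_forall hf0)).1 (by simp [h]), ?_⟩
  rw [integral_eq_lintegral_of_nonneg_ae (.of_forall hf0) hf, h, ENNReal.toReal_ofReal hr]

end MeasureTheory

theorem RealRMK.lintegral_ofReal_rieszMeasure {X : Type*} [TopologicalSpace X] [T2Space X]
    [LocallyCompactSpace X] [MeasurableSpace X] [BorelSpace X] (Λ : C_c(X, ℝ) →ₚ[ℝ] ℝ)
    {φ : C_c(X, ℝ)} (hφ : ∀ x, 0 ≤ φ x) :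
    ∫⁻ x, ENNReal.ofReal (φ x) ∂(rieszMeasure Λ) = ENNReal.ofReal (Λ φ) := by
  rw [← integral_rieszMeasure, ofReal_integral_eq_lintegral_ofReal φ.integrable (.of_forall hφ)]

namespace AdaptedSpace

variable {X : Type*} [TopologicalSpace X]

variable (X) in
def compactlySupportedSubmodule : Submodule ℝ C(X, ℝ) where
  carrier := {f | HasCompactSupport f}
  add_mem' hf hg := hf.add hg
  zero_mem' := HasCompactSupport.zero
  smul_mem' _ _ hf := hf.smul_left

theorem exists_nonneg_mem_one_le_of_isCompact {E : Submodule ℝ C(X, ℝ)}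
    (hpos : ∀ x : X, ∃ f ∈ E, (∀ y, 0 ≤ f y) ∧ 0 < f x) {K : Set X} (hK : IsCompact K) :
    ∃ g ∈ E, (∀ x, 0 ≤ g x) ∧ ∀ x ∈ K, 1 ≤ g x := by
  refine hK.induction_on ⟨0, E.zero_mem, fun _ => le_rfl, by simp⟩ ?_ ?_ ?_
  · rintro s t hst ⟨g, hgE, hg0, hg1⟩
    exact ⟨g, hgE, hg0, fun x hx => hg1 x (hst hx)⟩
  · rintro s t ⟨g, hgE, hg0, hg1⟩ ⟨h, hhE, hh0, hh1⟩
    refine ⟨g + h, E.add_mem hgE hhE, fun x => add_nonneg (hg0 x) (hh0 x), ?_⟩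
    rintro x (hx | hx) <;> simp only [ContinuousMap.add_apply]
    · linarith [hg1 x hx, hh0 x]
    · linarith [hg0 x, hh1 x hx]
  · intro x _
    obtain ⟨f, hfE, hf0, hfx⟩ := hpos x
    refine ⟨{y | f x / 2 < f y}, mem_nhdsWithin_of_mem_nhds
      ((isOpen_lt continuous_const f.continuous).mem_nhds (half_lt_self hfx)),
      (2 / f x) • f, E.smul_mem _ hfE, fun y => ?_, fun y hy => ?_⟩
    · simp only [ContinuousMap.smul_apply, smul_eq_mul]
      exact mul_nonneg (by positivity) (hf0 y)
    · simp only [mem_ofPred_eq] at hy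
      simp only [ContinuousMap.smul_apply, smul_eq_mul]
      rw [div_mul_eq_mul_div, le_div_iff₀ hfx]
      linarith

theorem exists_abs_le_mul_of_one_le_on_tsupport {c g : C(X, ℝ)} (hc : HasCompactSupport c)
    (hg0 : ∀ x, 0 ≤ g x) (hg1 : ∀ x ∈ tsupport c, 1 ≤ g x) :
    ∃ M, ∀ x, |c x| ≤ M * g x := by
  obtain ⟨C, hC⟩ := hc.exists_bound_of_continuous c.continuous
  refine ⟨max C 0, fun x => ?_⟩
  by_cases hx : x ∈ tsupport c
  · calc |c x| ≤ max C 0 * 1 := by simpa using (hC x).trans (le_max_left C 0)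
      _ ≤ max C 0 * g x := mul_le_mul_of_nonneg_left (hg1 x hx) (le_max_right C 0)
  · rw [image_eq_zero_of_notMem_tsupport hx, abs_zero]
    exact mul_nonneg (le_max_right C 0) (hg0 x)

section Extension

variable {E : Submodule ℝ C(X, ℝ)}
  (hdecomp : ∀ f ∈ E, ∃ g ∈ E, ∃ h ∈ E, (∀ x, 0 ≤ g x) ∧ (∀ x, 0 ≤ h x) ∧ f = g - h)
  (hpos : ∀ x : X, ∃ f ∈ E, (∀ y, 0 ≤ f y) ∧ 0 < f x)

include hdecomp hpos in
theorem exists_mem_add_nonneg_of_mem_sup {v : C(X, ℝ)}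
    (hv : v ∈ E ⊔ compactlySupportedSubmodule X) : ∃ u ∈ E, ∀ x, 0 ≤ u x + v x := by
  obtain ⟨e, heE, c, hc, rfl⟩ := Submodule.mem_sup.1 hv
  obtain ⟨g, -, h, hhE, hg0, -, rfl⟩ := hdecomp e heE
  obtain ⟨w, hwE, hw0, hw1⟩ := exists_nonneg_mem_one_le_of_isCompact hpos hc
  obtain ⟨M, hM⟩ := exists_abs_le_mul_of_one_le_on_tsupport hc hw0 hw1
  refine ⟨h + M • w, E.add_mem hhE (E.smul_mem M hwE), fun x => ?_⟩
  simp only [ContinuousMap.add_apply, ContinuousMap.sub_apply, ContinuousMap.smul_apply,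
    smul_eq_mul]
  linarith [hg0 x, hM x, neg_abs_le (c x)]

include hdecomp hpos in
/-- `Λ` is the restriction to `C_c(X, ℝ)` of a positive extension of `L` to
`E ⊔ C_c(X, ℝ)`. -/
theorem exists_positiveLinearMap_compatible (L : E →ₗ[ℝ] ℝ)
    (hL : ∀ f : E, (∀ x, 0 ≤ (f : C(X, ℝ)) x) → 0 ≤ L f) :
    ∃ Λ : C_c(X, ℝ) →ₚ[ℝ] ℝ, ∀ (u : E) (φ : C_c(X, ℝ)),
      ((∀ x, φ x ≤ (u : C(X, ℝ)) x) → Λ φ ≤ L u) ∧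
      ((∀ x, (u : C(X, ℝ)) x ≤ φ x) → L u ≤ Λ φ) := by
  set V := E ⊔ compactlySupportedSubmodule X
  have hEV : E ≤ V := le_sup_left
  let L' : V →ₗ.[ℝ] ℝ :=
    ⟨E.comap V.subtype, L ∘ₗ (Submodule.comapSubtypeEquivOfLe hEV).toLinearMap⟩
  obtain ⟨Λ', hΛ'L, hΛ'⟩ :=
    riesz_extension ((PointedCone.positive ℝ C(X, ℝ)).comap V.subtype) L'
      (fun u hu => hL _ fun x => hu x)
      (fun v => by
        obtain ⟨u, huE, hu⟩ := exists_mem_add_nonneg_of_mem_sup hdecomp hpos v.2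
        exact ⟨⟨⟨u, hEV huE⟩, huE⟩, fun x => hu x⟩)
  have hΛ'L : ∀ u : E, Λ' ⟨u, hEV u.2⟩ = L u := fun u => hΛ'L ⟨⟨u, hEV u.2⟩, u.2⟩
  have hmono : ∀ v w : V, (∀ x, (v : C(X, ℝ)) x ≤ (w : C(X, ℝ)) x) → Λ' v ≤ Λ' w := by
    intro v w hvw
    have := hΛ' (w - v) fun x => sub_nonneg.2 (hvw x)
    rwa [map_sub, sub_nonneg] at this
  let ι : C_c(X, ℝ) →ₗ[ℝ] V :=
    { toFun φ := ⟨φ, Submodule.mem_sup_right φ.hasCompactSupport⟩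
      map_add' _ _ := rfl
      map_smul' _ _ := rfl }
  refine ⟨.mk₀ (Λ' ∘ₗ ι) fun φ hφ => by simpa using hmono 0 (ι φ) hφ,
    fun u φ => ⟨fun h => ?_, fun h => ?_⟩⟩
  · rw [← hΛ'L]; exact hmono (ι φ) _ h
  · rw [← hΛ'L]; exact hmono _ (ι φ) h

end Extension

section LocallyCompact

variable [T2Space X] [LocallyCompactSpace X]

theorem exists_compactlySupported_le_eqOn {u : C(X, ℝ)} (hu : ∀ x, 0 ≤ u x) {K : Set X}
    (hK : IsCompact K) : ∃ φ : C_c(X, ℝ), (∀ x, 0 ≤ φ x ∧ φ x ≤ u x) ∧ EqOn φ u K := by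
  obtain ⟨ψ, hψ1, -, hψc, hψ01⟩ :=
    exists_continuous_one_zero_of_isCompact hK isClosed_empty (disjoint_empty K)
  refine ⟨⟨u * ψ, hψc.mul_left⟩, fun x => ⟨mul_nonneg (hu x) (hψ01 x).1,
    mul_le_of_le_one_right (hu x) (hψ01 x).2⟩, fun x hx => ?_⟩
  simp [hψ1 hx]

variable {E : Submodule ℝ C(X, ℝ)} {L : E →ₗ[ℝ] ℝ} {Λ : C_c(X, ℝ) →ₚ[ℝ] ℝ}
  (hdom : ∀ f ∈ E, (∀ x, 0 ≤ f x) → ∃ g ∈ E, (∀ x, 0 ≤ g x) ∧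
    ∀ ε : ℝ, 0 < ε → ∃ K : Set X, IsCompact K ∧ ∀ x ∉ K, |f x| ≤ ε * |g x|)
  (hΛL : ∀ (u : E) (φ : C_c(X, ℝ)), (∀ x, φ x ≤ (u : C(X, ℝ)) x) → Λ φ ≤ L u)
  (hLΛ : ∀ (u : E) (φ : C_c(X, ℝ)), (∀ x, (u : C(X, ℝ)) x ≤ φ x) → L u ≤ Λ φ)

include hdom hLΛ in
theorem exists_compactlySupported_le_sub_le {u : E} (hu : ∀ x, 0 ≤ (u : C(X, ℝ)) x)
    {δ : ℝ} (hδ : 0 < δ) :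
    ∃ φ : C_c(X, ℝ), (∀ x, 0 ≤ φ x ∧ φ x ≤ (u : C(X, ℝ)) x) ∧ L u - δ ≤ Λ φ := by
  obtain ⟨g, hgE, hg0, hg⟩ := hdom u u.2 hu
  set ε := δ / (|L ⟨g, hgE⟩| + 1)
  obtain ⟨K, hK, hKu⟩ := hg ε (by positivity)
  obtain ⟨φ, hφu, hφK⟩ := exists_compactlySupported_le_eqOn hu hK
  have hεg : ε * L ⟨g, hgE⟩ ≤ δ := calc
    ε * L ⟨g, hgE⟩ ≤ ε * (|L ⟨g, hgE⟩| + 1) := by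
      gcongr; linarith [le_abs_self (L ⟨g, hgE⟩)]
    _ = δ := div_mul_cancel₀ _ (by positivity)
  have hle : ∀ x, ((u - ε • ⟨g, hgE⟩ : E) : C(X, ℝ)) x ≤ φ x := fun x => by
    have hεg0 : 0 ≤ ε * g x := mul_nonneg (by positivity) (hg0 x)
    simp only [Submodule.coe_sub, Submodule.coe_smul, ContinuousMap.sub_apply,
      ContinuousMap.smul_apply, smul_eq_mul]
    by_cases hx : x ∈ K
    · rw [hφK hx]; linarith
    · have := hKu x hx
      rw [abs_of_nonneg (hu x), abs_of_nonneg (hg0 x)] at this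
      linarith [(hφu x).1]
  have := hLΛ _ φ hle
  rw [map_sub, map_smul, smul_eq_mul] at this
  exact ⟨φ, hφu, by linarith⟩

variable [MeasurableSpace X] [BorelSpace X]

include hdom hΛL hLΛ in
theorem lintegral_innerRegularization_rieszMeasure {u : E} (hu : ∀ x, 0 ≤ (u : C(X, ℝ)) x) :
    ∫⁻ x, ENNReal.ofReal ((u : C(X, ℝ)) x) ∂(RealRMK.rieszMeasure Λ).innerRegularization =
      ENNReal.ofReal (L u) := by
  set μ := RealRMK.rieszMeasure Λ
  rw [Measure.lintegral_innerRegularization μ (u : C(X, ℝ)).continuous.measurable.ennreal_ofReal]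
  set S := ⨆ K : Compacts X, ∫⁻ x in K, ENNReal.ofReal ((u : C(X, ℝ)) x) ∂μ
  have hupper : S ≤ ENNReal.ofReal (L u) := iSup_le fun K => by
    obtain ⟨φ, hφu, hφK⟩ := exists_compactlySupported_le_eqOn hu K.isCompact
    calc ∫⁻ x in K, ENNReal.ofReal ((u : C(X, ℝ)) x) ∂μ
        = ∫⁻ x in K, ENNReal.ofReal (φ x) ∂μ :=
          setLIntegral_congr_fun K.isCompact.measurableSet fun x hx => by rw [hφK hx]
      _ ≤ ∫⁻ x, ENNReal.ofReal (φ x) ∂μ := setLIntegral_le_lintegral _ _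
      _ = ENNReal.ofReal (Λ φ) := RealRMK.lintegral_ofReal_rieszMeasure Λ fun x => (hφu x).1
      _ ≤ ENNReal.ofReal (L u) := ENNReal.ofReal_le_ofReal (hΛL u φ fun x => (hφu x).2)
  have hlower : ∀ φ : C_c(X, ℝ), (∀ x, 0 ≤ φ x ∧ φ x ≤ (u : C(X, ℝ)) x) →
      ENNReal.ofReal (Λ φ) ≤ S := fun φ hφu => calc
    ENNReal.ofReal (Λ φ) = ∫⁻ x in tsupport φ, ENNReal.ofReal (φ x) ∂μ := by
      rw [← RealRMK.lintegral_ofReal_rieszMeasure Λ fun x => (hφu x).1,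
        setLIntegral_eq_of_support_subset]
      exact fun x hx => subset_tsupport φ fun h => hx (by simp [h])
    _ ≤ ∫⁻ x in tsupport φ, ENNReal.ofReal ((u : C(X, ℝ)) x) ∂μ :=
      lintegral_mono fun x => ENNReal.ofReal_le_ofReal (hφu x).2
    _ ≤ S := le_iSup_of_le (⟨tsupport φ, φ.hasCompactSupport⟩ : Compacts X) le_rfl
  have hS : S ≠ ∞ := ne_top_of_le_ne_top ENNReal.ofReal_ne_top hupper
  refine le_antisymm hupper ((ENNReal.ofReal_le_iff_le_toReal hS).2 ?_)
  refine le_of_forall_sub_le fun δ hδ => ?_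
  obtain ⟨φ, hφu, hφ⟩ := exists_compactlySupported_le_sub_le hdom hLΛ hu hδ
  exact hφ.trans ((ENNReal.ofReal_le_iff_le_toReal hS).1 (hlower φ hφu))

end LocallyCompact

theorem integrable_and_eq_integral_of_lintegral_eq [MeasurableSpace X] [OpensMeasurableSpace X]
    {E : Submodule ℝ C(X, ℝ)}
    (hdecomp : ∀ f ∈ E, ∃ g ∈ E, ∃ h ∈ E, (∀ x, 0 ≤ g x) ∧ (∀ x, 0 ≤ h x) ∧ f = g - h)
    {L : E →ₗ[ℝ] ℝ} (hL : ∀ f : E, (∀ x, 0 ≤ (f : C(X, ℝ)) x) → 0 ≤ L f) {μ : Measure X}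
    (hμ : ∀ u : E, (∀ x, 0 ≤ (u : C(X, ℝ)) x) →
      ∫⁻ x, ENNReal.ofReal ((u : C(X, ℝ)) x) ∂μ = ENNReal.ofReal (L u))
    (f : E) : Integrable (fun x => (f : C(X, ℝ)) x) μ ∧ L f = ∫ x, (f : C(X, ℝ)) x ∂μ := by
  have hnonneg : ∀ u : E, (∀ x, 0 ≤ (u : C(X, ℝ)) x) →
      Integrable (fun x => (u : C(X, ℝ)) x) μ ∧ ∫ x, (u : C(X, ℝ)) x ∂μ = L u := fun u hu =>
    integrable_and_integral_eq_of_lintegral_eq (u : C(X, ℝ)).continuous.aestronglyMeasurable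
      hu (hL u hu) (hμ u hu)
  obtain ⟨g, hgE, h, hhE, hg0, hh0, hf⟩ := hdecomp f f.2
  obtain ⟨hgi, hgL⟩ := hnonneg ⟨g, hgE⟩ hg0
  obtain ⟨hhi, hhL⟩ := hnonneg ⟨h, hhE⟩ hh0
  obtain rfl : f = ⟨g, hgE⟩ - ⟨h, hhE⟩ := Subtype.ext hf
  refine ⟨hgi.sub hhi, ?_⟩
  simp only [map_sub, Submodule.coe_sub, ContinuousMap.sub_apply]
  rw [integral_sub hgi hhi, hgL, hhL]

end AdaptedSpace

/-- Integral representation of positive linear functionals on adapted spaces (Choquet). -/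
theorem adapted_space_positive_functional_is_moment_functional
    {X : Type*} [TopologicalSpace X] [LocallyCompactSpace X] [T2Space X]
    [MeasurableSpace X] [BorelSpace X]
    (E : Submodule ℝ C(X, ℝ))
    -- (i)  E = E₊ - E₊
    (hdecomp : ∀ f ∈ E, ∃ g ∈ E, ∃ h ∈ E,
      (∀ x, 0 ≤ g x) ∧ (∀ x, 0 ≤ h x) ∧ f = g - h)
    -- (ii) for each x ∈ X there is f ∈ E₊ with f(x) > 0
    (hpos : ∀ x : X, ∃ f ∈ E, (∀ y, 0 ≤ f y) ∧ 0 < f x)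
    -- (iii) each f ∈ E₊ is dominated by some g ∈ E₊
    (hdom : ∀ f ∈ E, (∀ x, 0 ≤ f x) → ∃ g ∈ E, (∀ x, 0 ≤ g x) ∧
      ∀ ε : ℝ, 0 < ε → ∃ K : Set X, IsCompact K ∧ ∀ x ∉ K, |f x| ≤ ε * |g x|)
    (L : E →ₗ[ℝ] ℝ) :
    (∀ f : E, (∀ x, 0 ≤ (f : C(X, ℝ)) x) → 0 ≤ L f) ↔
    (∃ μ : Measure X, IsRadon μ ∧
      ∀ f : E, Integrable (fun x => (f : C(X, ℝ)) x) μ ∧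
        L f = ∫ x, (f : C(X, ℝ)) x ∂μ) := by
  refine ⟨fun hL => ?_, fun ⟨μ, _, hμ⟩ f hf => (hμ f).2 ▸ integral_nonneg hf⟩
  obtain ⟨Λ, hΛ⟩ := AdaptedSpace.exists_positiveLinearMap_compatible hdecomp hpos L hL
  refine ⟨(RealRMK.rieszMeasure Λ).innerRegularization, ⟨inferInstance, inferInstance⟩, ?_⟩
  exact AdaptedSpace.integrable_and_eq_integral_of_lintegral_eq hdecomp hL fun u hu =>
    AdaptedSpace.lintegral_innerRegularization_rieszMeasure hdom (fun u φ => (hΛ u φ).1)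
      (fun u φ => (hΛ u φ).2) hu
end

section
/- Let p ∈ ℝ[x] be a real polynomial in one variable and let a, b ∈ ℝ with a < b. Then: (i) p(x) ≥ 0 for all x ∈ ℝ if and only if p is a sum of squares in ℝ[x]; (ii) p(x) ≥ 0 for all x ∈ [0,+∞) if and only if p = f + x·g for some sums of squares f, g in ℝ[x]; (iii) p(x) ≥ 0 for all x ∈ [a,b] if and only if p = f + (b−x)(x−a)·g for some sums of squares f, g in ℝ[x]. -/
open Polynomial Set Filter Topology

/-- A sum of squares in `ℝ[x]`. -/
def IsSOS (p : Polynomial ℝ) : Prop :=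
  ∃ (n : ℕ) (q : Fin n → Polynomial ℝ), p = ∑ i, (q i) ^ 2

/-!
Let `M` be the set of certificates `σ + g τ` for `S = ℝ`, `[0, ∞)` or `[a, b]` (with `g = 0`,
`X` or `(b - X)(X - a)`); it is a semiring containing all sums of squares. If `p ≥ 0` on `S`,
it attains its minimum `m ≥ 0` on `S` at some `c`, and `p - m` vanishes at `c`: to second order
if `c` is interior, so that `p - m = (X - c)² s`, and otherwise `p - m = ℓ s` for the linear
factor `ℓ ∈ M` of `g` vanishing at the endpoint `c`. As `c` is not isolated in `S`, continuity
gives `s ≥ 0` on `S`, so `s ∈ M` by induction on the degree, and then `p ∈ M`.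
-/

theorem IsSumSq.map {R S : Type*} [Semiring R] [Semiring S] (f : R →+* S) {s : R}
    (hs : IsSumSq s) : IsSumSq (f s) := by
  induction hs with
  | zero => simp
  | sq_add a _ ih => simpa using IsSumSq.sq_add (f a) ih

theorem isSOS_iff_isSumSq {p : ℝ[X]} : IsSOS p ↔ IsSumSq p := by
  refine ⟨fun ⟨n, q, hp⟩ => hp ▸ IsSumSq.sum_sq _ q, fun hp => ?_⟩
  induction hp with
  | zero => exact ⟨0, ![], by simp⟩
  | sq_add a _ ih =>
    obtain ⟨n, q, rfl⟩ := ih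
    exact ⟨n + 1, Fin.cons a q, by simp [Fin.sum_univ_succ, sq]⟩

namespace Polynomial

theorem isSumSq_C {m : ℝ} (hm : 0 ≤ m) : IsSumSq (C m) :=
  (IsSquare.map C ⟨√m, (Real.mul_self_sqrt hm).symm⟩).isSumSq

theorem _root_.IsSumSq.eval_nonneg {p : ℝ[X]} (hp : IsSumSq p) (x : ℝ) : 0 ≤ p.eval x :=
  (hp.map (evalRingHom x)).nonneg

theorem natDegree_lt_of_eq_mul {R : Type*} [Semiring R] [NoZeroDivisors R] {q d s : R[X]}
    (hq : q ≠ 0) (hd : 0 < d.natDegree) (h : q = d * s) : s.natDegree < q.natDegree := by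
  have hd0 : d ≠ 0 := by rintro rfl; simp [h] at hq
  have hs0 : s ≠ 0 := by rintro rfl; simp [h] at hq
  rw [h, natDegree_mul hd0 hs0]
  omega

theorem sq_dvd_of_isLocalMin {q : ℝ[X]} {c : ℝ} (hroot : q.IsRoot c)
    (hmin : IsLocalMin q.eval c) : (X - C c) ^ 2 ∣ q := by
  rcases eq_or_ne q 0 with rfl | hq0
  · exact dvd_zero _
  rw [← le_rootMultiplicity_iff hq0]
  refine (one_lt_rootMultiplicity_iff_isRoot hq0).mpr ⟨hroot, ?_⟩
  simpa [← Polynomial.deriv] using hmin.deriv_eq_zero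

theorem exists_isMinOn_eval {S : Set ℝ} (hS : IsClosed S) (hne : S.Nonempty) {p : ℝ[X]}
    (hp : ∀ x ∈ S, 0 ≤ p.eval x) : ∃ c ∈ S, IsMinOn p.eval S c := by
  obtain ⟨x₀, hx₀⟩ := hne
  refine p.continuous.continuousOn.exists_isMinOn' hS hx₀ ?_
  by_cases hdeg : 0 < p.degree
  · have hnorm := p.tendsto_norm_atTop hdeg tendsto_norm_cocompact_atTop
    filter_upwards [mem_inf_of_left (hnorm.eventually_ge_atTop (p.eval x₀)),
      mem_inf_of_right (mem_principal_self S)] with x hx hxS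
    rwa [Real.norm_of_nonneg (hp x hxS)] at hx
  · rw [eq_C_of_degree_le_zero (not_lt.mp hdeg)]
    simp

theorem eval_nonneg_of_eval_mul_nonneg {S : Set ℝ} (hS : Preperfect S) {c : ℝ} (hc : c ∈ S)
    {d s : ℝ[X]} (hd : ∀ x ∈ S, x ≠ c → 0 < d.eval x) (hds : ∀ x ∈ S, 0 ≤ (d * s).eval x) :
    ∀ x ∈ S, 0 ≤ s.eval x := by
  have off : ∀ x ∈ S \ {c}, 0 ≤ s.eval x := fun x ⟨hx, hxc⟩ =>
    nonneg_of_mul_nonneg_right (by simpa using hds x hx) (hd x hx hxc)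
  intro x hx
  rcases eq_or_ne x c with rfl | hxc
  · have := accPt_principal_iff_nhdsWithin.mp (hS x hx)
    exact ge_of_tendsto (s.continuous.tendsto x |>.mono_left nhdsWithin_le_nhds)
      (eventually_nhdsWithin_of_forall off)
  · exact off x ⟨hx, hxc⟩

end Polynomial

section QuadraticModule

variable {R : Type*} [CommSemiring R]

/-- Closed under multiplication because `g * g` is a square: this is also the preordering
generated by `g`. -/
def quadraticModule (g : R) : Subsemiring R where
  carrier := {p | ∃ σ τ, IsSumSq σ ∧ IsSumSq τ ∧ p = σ + g * τ}
  mul_mem' := by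
    rintro _ _ ⟨σ₁, τ₁, hσ₁, hτ₁, rfl⟩ ⟨σ₂, τ₂, hσ₂, hτ₂, rfl⟩
    refine ⟨σ₁ * σ₂ + g * g * (τ₁ * τ₂), σ₁ * τ₂ + τ₁ * σ₂, ?_, ?_, by ring⟩
    · exact (hσ₁.mul hσ₂).add ((IsSumSq.mul_self g).mul (hτ₁.mul hτ₂))
    · exact (hσ₁.mul hτ₂).add (hτ₁.mul hσ₂)
  one_mem' := ⟨1, 0, .one, .zero, by simp⟩
  add_mem' := by
    rintro _ _ ⟨σ₁, τ₁, hσ₁, hτ₁, rfl⟩ ⟨σ₂, τ₂, hσ₂, hτ₂, rfl⟩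
    exact ⟨σ₁ + σ₂, τ₁ + τ₂, hσ₁.add hσ₂, hτ₁.add hτ₂, by ring⟩
  zero_mem' := ⟨0, 0, .zero, .zero, by simp⟩

theorem mem_quadraticModule {g p : R} :
    p ∈ quadraticModule g ↔ ∃ σ τ, IsSumSq σ ∧ IsSumSq τ ∧ p = σ + g * τ :=
  Iff.rfl

theorem IsSumSq.mem_quadraticModule {σ : R} (hσ : IsSumSq σ) (g : R) :
    σ ∈ quadraticModule g :=
  ⟨σ, 0, hσ, .zero, by simp⟩

theorem self_mem_quadraticModule (g : R) : g ∈ quadraticModule g :=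
  ⟨0, 1, .zero, .one, by simp⟩

end QuadraticModule

theorem eval_nonneg_of_mem_quadraticModule {g p : ℝ[X]} (hp : p ∈ quadraticModule g) {x : ℝ}
    (hg : 0 ≤ g.eval x) : 0 ≤ p.eval x := by
  obtain ⟨σ, τ, hσ, hτ, rfl⟩ := hp
  simpa using add_nonneg (hσ.eval_nonneg x) (mul_nonneg hg (hτ.eval_nonneg x))

/-- `k ℓ₁ = ℓ₁ ^ 2 + ℓ₁ ℓ₂`. -/
theorem mem_quadraticModule_mul_of_add_eq_C {ℓ₁ ℓ₂ : ℝ[X]} {k : ℝ} (hk : 0 < k)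
    (h : ℓ₁ + ℓ₂ = C k) : ℓ₁ ∈ quadraticModule (ℓ₁ * ℓ₂) := by
  have hk' : IsSumSq (C k⁻¹) := isSumSq_C (inv_nonneg.mpr hk.le)
  refine ⟨C k⁻¹ * (ℓ₁ * ℓ₁), C k⁻¹, hk'.mul (.mul_self ℓ₁), hk', ?_⟩
  have hinv : C k⁻¹ * C k = 1 := by rw [← C_mul, inv_mul_cancel₀ hk.ne', C_1]
  linear_combination (-(C k⁻¹ * ℓ₁)) * h - ℓ₁ * hinv

section Descent

variable {S : Set ℝ} {M : Subsemiring ℝ[X]}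

theorem exists_eq_mul_of_isMinOn (hM : ∀ {σ}, IsSumSq σ → σ ∈ M)
    (hbdry : ∀ c ∈ S \ interior S,
      ∃ α ≠ 0, C α * (X - C c) ∈ M ∧ ∀ x ∈ S, x ≠ c → 0 < α * (x - c))
    {q : ℝ[X]} {c : ℝ} (hc : c ∈ S) (hmin : IsMinOn q.eval S c) (hroot : q.IsRoot c) :
    ∃ d s, d ∈ M ∧ 0 < d.natDegree ∧ (∀ x ∈ S, x ≠ c → 0 < d.eval x) ∧ q = d * s := by
  by_cases hint : c ∈ interior S
  · obtain ⟨s, hs⟩ :=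
      sq_dvd_of_isLocalMin hroot (hmin.isLocalMin (mem_interior_iff_mem_nhds.mp hint))
    refine ⟨(X - C c) ^ 2, s, hM (IsSquare.isSumSq ⟨X - C c, sq _⟩), by simp, fun x _ hxc => ?_, hs⟩
    simpa using sq_pos_of_ne_zero (sub_ne_zero.mpr hxc)
  · obtain ⟨α, hα, hαM, hαpos⟩ := hbdry c ⟨hc, hint⟩
    refine ⟨C α * (X - C c), C α⁻¹ * (q /ₘ (X - C c)), hαM, by simp [natDegree_C_mul hα],
      fun x hx hxc => by simpa using hαpos x hx hxc, ?_⟩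
    have hinv : C α * C α⁻¹ = 1 := by rw [← C_mul, mul_inv_cancel₀ hα, C_1]
    linear_combination
      (-(X - C c) * (q /ₘ (X - C c))) * hinv - mul_divByMonic_eq_iff_isRoot.mpr hroot

theorem mem_of_eval_nonneg (hS : Perfect S) (hne : S.Nonempty) (hM : ∀ {σ}, IsSumSq σ → σ ∈ M)
    (hbdry : ∀ c ∈ S \ interior S,
      ∃ α ≠ 0, C α * (X - C c) ∈ M ∧ ∀ x ∈ S, x ≠ c → 0 < α * (x - c))
    {p : ℝ[X]} (hp : ∀ x ∈ S, 0 ≤ p.eval x) : p ∈ M := by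
  induction hn : p.natDegree using Nat.strong_induction_on generalizing p with
  | _ n ih =>
  obtain ⟨c, hc, hmin⟩ := exists_isMinOn_eval hS.closed hne hp
  set q := p - C (p.eval c)
  have hqmin : IsMinOn q.eval S c := fun x hx => by simpa [q] using hmin hx
  have hroot : q.IsRoot c := by simp [q]
  rw [show p = C (p.eval c) + q by ring]
  refine add_mem (hM (isSumSq_C (hp c hc))) ?_
  rcases eq_or_ne q 0 with hq0 | hq0
  · rw [hq0]
    exact zero_mem M
  obtain ⟨d, s, hdM, hdeg, hdpos, hqds⟩ := exists_eq_mul_of_isMinOn hM hbdry hc hqmin hroot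
  have hs : ∀ x ∈ S, 0 ≤ s.eval x := eval_nonneg_of_eval_mul_nonneg hS.acc hc hdpos
    fun x hx => hqds ▸ hroot.eq_zero ▸ hqmin hx
  rw [hqds]
  refine mul_mem hdM (ih _ ?_ hs rfl)
  calc s.natDegree < q.natDegree := natDegree_lt_of_eq_mul hq0 hdeg hqds
    _ = n := by rw [natDegree_sub_C, hn]

end Descent

theorem isSumSq_iff_eval_nonneg {p : ℝ[X]} : IsSumSq p ↔ ∀ x, 0 ≤ p.eval x := by
  refine ⟨fun hp x => hp.eval_nonneg x, fun hp => ?_⟩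
  rw [← Subsemiring.mem_sumSq]
  refine mem_of_eval_nonneg (PerfectSpace.univ_perfect ℝ) univ_nonempty
    Subsemiring.mem_sumSq.mpr ?_ fun x _ => hp x
  simp

theorem mem_quadraticModule_X_iff {p : ℝ[X]} :
    p ∈ quadraticModule X ↔ ∀ x : ℝ, 0 ≤ x → 0 ≤ p.eval x := by
  refine ⟨fun hp x hx => eval_nonneg_of_mem_quadraticModule hp (by simpa), fun hp => ?_⟩
  have hS : Perfect (Ici (0 : ℝ)) := closure_Ioi (0 : ℝ) ▸ isOpen_Ioi.perfect_closure
  refine mem_of_eval_nonneg hS nonempty_Ici (·.mem_quadraticModule X) ?_ hp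
  rintro c ⟨hc, hci⟩
  rw [interior_Ici, mem_Ioi, not_lt] at hci
  obtain rfl : c = 0 := le_antisymm hci hc
  exact ⟨1, one_ne_zero, by simpa using self_mem_quadraticModule X,
    fun x hx hx0 => by simpa using lt_of_le_of_ne hx (Ne.symm hx0)⟩

theorem mem_quadraticModule_Icc_iff {a b : ℝ} (hab : a < b) {p : ℝ[X]} :
    p ∈ quadraticModule ((C b - X) * (X - C a)) ↔ ∀ x ∈ Icc a b, 0 ≤ p.eval x := by
  refine ⟨fun hp x hx => eval_nonneg_of_mem_quadraticModule hp ?_, fun hp => ?_⟩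
  · simpa using mul_nonneg (sub_nonneg.mpr hx.2) (sub_nonneg.mpr hx.1)
  have hS : Perfect (Icc a b) := closure_Ioo hab.ne ▸ isOpen_Ioo.perfect_closure
  refine mem_of_eval_nonneg hS (nonempty_Icc.mpr hab.le) (·.mem_quadraticModule _) ?_ hp
  have hsum : (X - C a) + (C b - X) = C (b - a) := by rw [C_sub]; ring
  rintro c ⟨hc, hci⟩
  rw [interior_Icc] at hci
  obtain rfl | rfl : c = a ∨ c = b := by
    by_contra! h
    exact hci ⟨lt_of_le_of_ne hc.1 h.1.symm, lt_of_le_of_ne hc.2 h.2⟩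
  · refine ⟨1, one_ne_zero, ?_, fun x hx hxc => by simpa using lt_of_le_of_ne hx.1 (Ne.symm hxc)⟩
    simpa [mul_comm] using mem_quadraticModule_mul_of_add_eq_C (sub_pos.mpr hab) hsum
  · refine ⟨-1, by norm_num, ?_, fun x hx hxc => by simpa using lt_of_le_of_ne hx.2 hxc⟩
    simpa using mem_quadraticModule_mul_of_add_eq_C (sub_pos.mpr hab) ((add_comm _ _).trans hsum)

/-- Descriptions of polynomials nonnegative on `ℝ`, `[0,∞)` and `[a,b]`. -/
theorem positive_polynomials_on_intervals (p : Polynomial ℝ) (a b : ℝ) (hab : a < b) :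
    ((∀ x : ℝ, 0 ≤ p.eval x) ↔ IsSOS p) ∧
    ((∀ x : ℝ, 0 ≤ x → 0 ≤ p.eval x) ↔
      ∃ f g : Polynomial ℝ, IsSOS f ∧ IsSOS g ∧ p = f + Polynomial.X * g) ∧
    ((∀ x ∈ Set.Icc a b, 0 ≤ p.eval x) ↔
      ∃ f g : Polynomial ℝ, IsSOS f ∧ IsSOS g ∧
        p = f + (Polynomial.C b - Polynomial.X) * (Polynomial.X - Polynomial.C a) * g) := by
  simp only [isSOS_iff_isSumSq, ← mem_quadraticModule]
  exact ⟨isSumSq_iff_eval_nonneg.symm, mem_quadraticModule_X_iff.symm,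
    (mem_quadraticModule_Icc_iff hab).symm⟩
end

section
/- Hamburger's theorem: For a real sequence s = (s_n)_{n∈ℕ₀} the following are equivalent: (i) there exists a Radon measure μ on ℝ such that for every n the function x^n is μ-integrable and s_n = ∫_ℝ x^n dμ(x); (ii) for every n ∈ ℕ₀ the Hankel matrix H_n(s) is positive semidefinite, equivalently ∑_{k,l=0}^n s_{k+l} ξ_k ξ_l ≥ 0 for all ξ₀,…,ξ_n ∈ ℝ. -/
/-!
For a moment sequence, `∑ s (k + l) ξ k ξ l = ∫ (∑ ξ k x ^ k) ^ 2 dμ ≥ 0`.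

Conversely, positive semidefiniteness of the Hankel matrices says that the moment functional
`L (∑ c k X ^ k) = ∑ c k s k` is nonnegative on squares, hence on every polynomial that is
nonnegative on `ℝ`, because such a polynomial is a sum of two squares (pair each complex root with
its conjugate; real roots have even multiplicity). Polynomials are cofinal among the polynomially
bounded functions, so M. Riesz's extension theorem extends `L` to a positive functional `Λ` on
them, and by Riesz–Markov–Kakutani `Λ` is integration against a Radon measure `μ` on compactly
supported continuous functions. Finally `Λ (x ^ n) = ∫ x ^ n dμ`: multiply `x ^ n` by bumps equal
to `1` on `[-j, j]`; the integrals converge by dominated convergence, and the tails, bounded by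
`x ^ 2 q x / j ^ 2` for a polynomial `q ≥ |x ^ n|`, have `Λ`-value `O(1 / j ^ 2)`.
-/

open MeasureTheory

open Polynomial Filter Topology
open scoped Matrix CompactlySupported

instance Submodule.posSMulMono {R M : Type*} [Semiring R] [PartialOrder R] [AddCommMonoid M]
    [PartialOrder M] [Module R M] [PosSMulMono R M] (N : Submodule R M) : PosSMulMono R N :=
  ⟨fun _ hc a b hab => Subtype.coe_le_coe.1
    (smul_le_smul_of_nonneg_left (Subtype.coe_le_coe.2 hab : (a : M) ≤ b) hc)⟩

lemma PositiveLinearMap.abs_apply_le {E : Type*} [AddCommGroup E] [PartialOrder E]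
    [IsOrderedAddMonoid E] [Module ℝ E] (Λ : E →ₚ[ℝ] ℝ) {f g : E} (h₁ : -g ≤ f) (h₂ : f ≤ g) :
    |Λ f| ≤ Λ g :=
  abs_le.2 ⟨by simpa using Λ.monotone h₁, Λ.monotone h₂⟩

namespace Hamburger

lemma sq_X_sub_C_dvd_of_eval_nonneg {p : ℝ[X]} (hp : ∀ x, 0 ≤ p.eval x) {r : ℝ}
    (hr : p.IsRoot r) : (X - C r) ^ 2 ∣ p := by
  obtain ⟨q, rfl⟩ := dvd_iff_isRoot.2 hr
  have hmin : IsLocalMin (fun x => ((X - C r) * q).eval x) r :=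
    .of_forall fun x => by simpa using hp x
  have hq : q.IsRoot r := by
    have := hmin.deriv_eq_zero
    rw [Polynomial.deriv] at this
    simpa [derivative_mul] using this
  obtain ⟨q', rfl⟩ := dvd_iff_isRoot.2 hq
  exact ⟨q', by ring⟩

lemma exists_sq_add_sq_dvd_of_eval_nonneg {p : ℝ[X]} (hp : ∀ x, 0 ≤ p.eval x)
    (hdeg : p.natDegree ≠ 0) : ∃ a b : ℝ, (X - C a) ^ 2 + C b ^ 2 ∣ p := by
  obtain ⟨z, hz⟩ := IsAlgClosed.exists_aeval_eq_zero ℂ p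
    fun h => hdeg (natDegree_eq_of_degree_eq_some h)
  refine ⟨z.re, z.im, ?_⟩
  by_cases him : z.im = 0
  · have hr : p.IsRoot z.re := by
      have : z = algebraMap ℝ ℂ z.re := Complex.ext rfl (by simp [him])
      rw [this, aeval_algebraMap_apply_eq_algebraMap_eval] at hz
      exact (FaithfulSMul.algebraMap_eq_zero_iff ℝ ℂ).1 hz
    simpa [him] using sq_X_sub_C_dvd_of_eval_nonneg hp hr
  · convert p.quadratic_dvd_of_aeval_eq_zero_im_ne_zero hz him using 1
    rw [Complex.sq_norm, Complex.normSq_apply]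
    simp only [map_add, map_mul, map_ofNat]
    ring

lemma eval_nonneg_of_eq_mul {p d q : ℝ[X]} (hp : ∀ x, 0 ≤ p.eval x) (hpdq : p = d * q) {r : ℝ}
    (hd : ∀ x ≠ r, 0 < d.eval x) (x : ℝ) : 0 ≤ q.eval x := by
  have hoff : ∀ y ∈ ({r}ᶜ : Set ℝ), 0 ≤ q.eval y := fun y hy =>
    nonneg_of_mul_nonneg_right (by simpa [hpdq] using hp y) (hd y hy)
  exact (isClosed_le continuous_const q.continuous).closure_subset_iff.2 hoff
    ((dense_compl_singleton r).closure_eq ▸ Set.mem_univ x)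

theorem exists_eq_sq_add_sq_of_eval_nonneg (p : ℝ[X]) (hp : ∀ x, 0 ≤ p.eval x) :
    ∃ a b : ℝ[X], p = a ^ 2 + b ^ 2 := by
  by_cases hdeg : p.natDegree = 0
  · rw [eq_C_of_natDegree_eq_zero hdeg] at hp ⊢
    refine ⟨C √(p.coeff 0), 0, ?_⟩
    rw [← C_pow, Real.sq_sqrt (by simpa using hp 0)]
    simp
  obtain ⟨a, b, q, hpq⟩ := exists_sq_add_sq_dvd_of_eval_nonneg hp hdeg
  have hmonic : ((X - C a) ^ 2 + C b ^ 2).Monic := by monicity!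
  have hdeg2 : ((X - C a) ^ 2 + C b ^ 2).natDegree = 2 := by compute_degree!
  have hq0 : q ≠ 0 := by rintro rfl; simp [hpq] at hdeg
  have hlt : q.natDegree < p.natDegree := by
    rw [hpq, hmonic.natDegree_mul' hq0, hdeg2]; omega
  have hq : ∀ x, 0 ≤ q.eval x := eval_nonneg_of_eq_mul hp hpq fun x hx => by
    simp only [eval_add, eval_pow, eval_sub, eval_X, eval_C]
    exact add_pos_of_pos_of_nonneg (pow_two_pos_of_ne_zero (sub_ne_zero.2 hx)) (sq_nonneg b)
  obtain ⟨c, d, rfl⟩ := exists_eq_sq_add_sq_of_eval_nonneg q hq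
  exact ⟨(X - C a) * c - C b * d, (X - C a) * d + C b * c, by rw [hpq]; ring⟩
termination_by p.natDegree

section MomentFunctional

variable {R : Type*} [CommSemiring R]

noncomputable def momentFunctional (s : ℕ → R) : R[X] →ₗ[R] R :=
  lsum fun n => LinearMap.id.smulRight (s n)

@[simp]
lemma momentFunctional_monomial (s : ℕ → R) (n : ℕ) (c : R) :
    momentFunctional s (monomial n c) = c * s n := by
  simp [momentFunctional, sum_monomial_index]

lemma momentFunctional_C_mul_X_pow (s : ℕ → R) (n : ℕ) (c : R) :
    momentFunctional s (C c * X ^ n) = c * s n := by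
  rw [C_mul_X_pow_eq_monomial, momentFunctional_monomial]

lemma momentFunctional_X_pow (s : ℕ → R) (n : ℕ) : momentFunctional s (X ^ n) = s n := by
  simpa using momentFunctional_C_mul_X_pow s n 1

def hankel (s : ℕ → R) (n : ℕ) : Matrix (Fin (n + 1)) (Fin (n + 1)) R :=
  Matrix.of fun i j => s (i + j)

lemma dotProduct_hankel_mulVec (s : ℕ → R) (n : ℕ) (v : Fin (n + 1) → R) :
    v ⬝ᵥ hankel s n *ᵥ v = momentFunctional s ((∑ i, C (v i) * X ^ (i : ℕ)) ^ 2) := by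
  rw [sq, Finset.sum_mul_sum]
  simp only [map_sum, dotProduct, Matrix.mulVec, hankel, Matrix.of_apply, Finset.mul_sum]
  refine Finset.sum_congr rfl fun i _ => Finset.sum_congr rfl fun j _ => ?_
  rw [show C (v i) * X ^ (i : ℕ) * (C (v j) * X ^ (j : ℕ)) = C (v i * v j) * X ^ ((i : ℕ) + j) by
    rw [C_mul, pow_add]; ring, momentFunctional_C_mul_X_pow]
  ring

end MomentFunctional

theorem hankel_posSemidef_iff (s : ℕ → ℝ) :
    (∀ n, (hankel s n).PosSemidef) ↔ ∀ p : ℝ[X], 0 ≤ momentFunctional s (p ^ 2) := by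
  refine ⟨fun h p => ?_, fun h n => .of_dotProduct_mulVec_nonneg ?_ fun v => ?_⟩
  · have := (h p.natDegree).dotProduct_mulVec_nonneg (fun i => p.coeff i)
    rwa [star_trivial, dotProduct_hankel_mulVec, Fin.sum_univ_eq_sum_range
      (fun i => C (p.coeff i) * X ^ i), ← as_sum_range_C_mul_X_pow] at this
  · ext i j
    simp [hankel, add_comm]
  · rw [star_trivial, dotProduct_hankel_mulVec]
    exact h _

lemma momentFunctional_nonneg {s : ℕ → ℝ} (hs : ∀ p : ℝ[X], 0 ≤ momentFunctional s (p ^ 2))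
    {p : ℝ[X]} (hp : ∀ x, 0 ≤ p.eval x) : 0 ≤ momentFunctional s p := by
  obtain ⟨a, b, rfl⟩ := exists_eq_sq_add_sq_of_eval_nonneg p hp
  rw [map_add]
  exact add_nonneg (hs a) (hs b)

def HasMomentSequence (μ : Measure ℝ) (s : ℕ → ℝ) : Prop :=
  ∀ n : ℕ, Integrable (fun x : ℝ => x ^ n) μ ∧ s n = ∫ x : ℝ, x ^ n ∂μ

lemma HasMomentSequence.integrable_and_integral_eval {μ : Measure ℝ} {s : ℕ → ℝ}
    (h : HasMomentSequence μ s) (p : ℝ[X]) :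
    Integrable (fun x => p.eval x) μ ∧ ∫ x, p.eval x ∂μ = momentFunctional s p := by
  induction p using Polynomial.induction_on' with
  | add p q hp hq =>
    simp only [eval_add, map_add]
    exact ⟨hp.1.add hq.1, by rw [integral_add hp.1 hq.1, hp.2, hq.2]⟩
  | monomial n c =>
    simp only [eval_monomial, momentFunctional_monomial]
    exact ⟨(h n).1.const_mul c, by rw [integral_const_mul, (h n).2]⟩

theorem HasMomentSequence.hankel_posSemidef {μ : Measure ℝ} {s : ℕ → ℝ}
    (h : HasMomentSequence μ s) (n : ℕ) : (hankel s n).PosSemidef := by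
  refine (hankel_posSemidef_iff s).2 (fun p => ?_) n
  rw [← (h.integrable_and_integral_eval _).2]
  exact integral_nonneg fun x => by simpa using sq_nonneg (p.eval x)

def polyBounded : Submodule ℝ (ℝ → ℝ) where
  carrier := {f | ∃ p : ℝ[X], ∀ x, |f x| ≤ p.eval x}
  add_mem' := by
    rintro f g ⟨p, hp⟩ ⟨q, hq⟩
    exact ⟨p + q, fun x => (abs_add_le _ _).trans (by simpa using add_le_add (hp x) (hq x))⟩
  zero_mem' := ⟨0, by simp⟩
  smul_mem' := by
    rintro c f ⟨p, hp⟩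
    exact ⟨C |c| * p, fun x => by
      simpa [abs_mul] using mul_le_mul_of_nonneg_left (hp x) (abs_nonneg c)⟩

instance : CoeFun polyBounded fun _ => ℝ → ℝ := ⟨Subtype.val⟩

lemma eval_mem_polyBounded (p : ℝ[X]) : (fun x => p.eval x) ∈ polyBounded :=
  ⟨p ^ 2 + 1, fun x => by
    simp only [eval_add, eval_pow, eval_one]
    nlinarith [sq_abs (p.eval x), sq_nonneg (|p.eval x| - 1)]⟩

noncomputable def evalPolyBounded : ℝ[X] →ₗ[ℝ] polyBounded :=
  (LinearMap.pi leval).codRestrict polyBounded eval_mem_polyBounded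

@[simp]
lemma coe_evalPolyBounded (p : ℝ[X]) : (evalPolyBounded p : ℝ → ℝ) = fun x => p.eval x := rfl

lemma evalPolyBounded_injective : Function.Injective evalPolyBounded := fun _ _ h =>
  Polynomial.funext fun x => congr_fun (congr_arg Subtype.val h) x

theorem exists_positiveLinearMap_polyBounded_extension (L : ℝ[X] →ₗ[ℝ] ℝ)
    (hL : ∀ p : ℝ[X], (∀ x, 0 ≤ p.eval x) → 0 ≤ L p) :
    ∃ Λ : polyBounded →ₚ[ℝ] ℝ, ∀ p, Λ (evalPolyBounded p) = L p := by
  let e := LinearEquiv.ofInjective evalPolyBounded evalPolyBounded_injective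
  let L' : polyBounded →ₗ.[ℝ] ℝ := ⟨LinearMap.range evalPolyBounded, L ∘ₗ e.symm.toLinearMap⟩
  have hnonneg : ∀ f : L'.domain, (f : polyBounded) ∈ PointedCone.positive ℝ polyBounded →
      0 ≤ L' f := by
    rintro ⟨_, p, rfl⟩ hp
    have : (⟨_, p, rfl⟩ : LinearMap.range evalPolyBounded) = e p := rfl
    simpa [L', this] using hL p hp
  have hcofinal : ∀ f, ∃ g : L'.domain,
      (g : polyBounded) + f ∈ PointedCone.positive ℝ polyBounded := by
    rintro ⟨f, q, hq⟩
    exact ⟨e q, fun x => by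
      simpa [e] using neg_le_iff_add_nonneg'.1 ((abs_le.1 (hq x)).1)⟩
  obtain ⟨Λ, hext, hpos⟩ := riesz_extension _ L' hnonneg hcofinal
  exact ⟨.mk₀ Λ hpos, fun p =>
    (by simpa [L', e] using hext (e p) : Λ (evalPolyBounded p) = L p)⟩

noncomputable def cutoff (j : ℕ) : ContDiffBump (0 : ℝ) :=
  ⟨j + 1, j + 2, by positivity, by linarith⟩

lemma cutoff_eq_one {j : ℕ} {x : ℝ} (hx : |x| ≤ j + 1) : cutoff j x = 1 :=
  (cutoff j).one_of_mem_closedBall (by simpa [cutoff] using hx)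

noncomputable def truncate (f : polyBounded) (j : ℕ) : polyBounded :=
  ⟨fun x => cutoff j x * f x, by
    obtain ⟨q, hq⟩ := f.2
    refine ⟨q, fun x => le_trans ?_ (hq x)⟩
    rw [abs_mul, abs_of_nonneg (cutoff j).nonneg]
    exact mul_le_of_le_one_left (abs_nonneg _) (cutoff j).le_one⟩

lemma truncate_apply (f : polyBounded) (j : ℕ) (x : ℝ) : truncate f j x = cutoff j x * f x := rfl

lemma abs_truncate_le (f : polyBounded) (j : ℕ) (x : ℝ) : |truncate f j x| ≤ |f x| := by
  rw [truncate_apply, abs_mul, abs_of_nonneg (cutoff j).nonneg]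
  exact mul_le_of_le_one_left (abs_nonneg _) (cutoff j).le_one

lemma continuous_truncate {f : polyBounded} (hf : Continuous f) (j : ℕ) :
    Continuous (truncate f j) :=
  (cutoff j).continuous.mul hf

lemma hasCompactSupport_truncate (f : polyBounded) (j : ℕ) : HasCompactSupport (truncate f j) :=
  (cutoff j).hasCompactSupport.mul_right

lemma tendsto_truncate (f : polyBounded) (x : ℝ) :
    Tendsto (fun j => truncate f j x) atTop (𝓝 (f x)) := by
  obtain ⟨j₀, hj₀⟩ := exists_nat_ge |x|
  refine tendsto_const_nhds.congr' ?_
  filter_upwards [eventually_ge_atTop j₀] with j hj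
  have : (j₀ : ℝ) ≤ j := by exact_mod_cast hj
  rw [truncate_apply, cutoff_eq_one (by linarith), one_mul]

lemma tendsto_apply_truncate (Λ : polyBounded →ₚ[ℝ] ℝ) (f : polyBounded) :
    Tendsto (fun j => Λ (truncate f j)) atTop (𝓝 (Λ f)) := by
  obtain ⟨q, hq⟩ := f.2
  let c : ℕ → ℝ := fun j => (1 / ((j : ℝ) + 1)) ^ 2
  have htail : ∀ j, |Λ f - Λ (truncate f j)| ≤ c j * Λ (evalPolyBounded (X ^ 2 * q)) := by
    intro j
    rw [← map_sub, ← smul_eq_mul, ← map_smul]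
    have hpt : ∀ x, |f x - truncate f j x| ≤ c j * (x ^ 2 * q.eval x) := by
      intro x
      have hq0 : 0 ≤ q.eval x := (abs_nonneg _).trans (hq x)
      by_cases hx : |x| ≤ j + 1
      · rw [truncate_apply, cutoff_eq_one hx, one_mul, sub_self, abs_zero]
        positivity
      · have hc : 1 ≤ c j * x ^ 2 := by
          rw [← sq_abs x, ← mul_pow, one_div_mul_eq_div]
          exact one_le_pow₀ ((one_le_div (by positivity)).2 (by linarith))
        calc |f x - truncate f j x| = (1 - cutoff j x) * |f x| := by
              rw [truncate_apply, ← one_sub_mul, abs_mul,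
                abs_of_nonneg (sub_nonneg.2 (cutoff j).le_one)]
          _ ≤ 1 * q.eval x :=
              mul_le_mul (sub_le_self _ (cutoff j).nonneg) (hq x) (abs_nonneg _) zero_le_one
          _ ≤ c j * (x ^ 2 * q.eval x) := by nlinarith
    exact Λ.abs_apply_le (fun x => by simpa using neg_le_of_abs_le (hpt x))
      (fun x => by simpa using le_of_abs_le (hpt x))
  rw [tendsto_iff_norm_sub_tendsto_zero]
  refine squeeze_zero (fun _ => norm_nonneg _) (fun j => (abs_sub_comm _ _).trans_le (htail j)) ?_
  simpa [c] using (tendsto_one_div_add_atTop_nhds_zero_nat.pow 2).mul_const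
    (Λ (evalPolyBounded (X ^ 2 * q)))

section Integration

variable (Λ : polyBounded →ₚ[ℝ] ℝ) {μ : Measure ℝ} [IsFiniteMeasureOnCompacts μ]

lemma integrable_of_continuous_of_nonneg
    (hμ : ∀ g : polyBounded, Continuous g → HasCompactSupport g → ∫ x, g x ∂μ = Λ g)
    {f : polyBounded} (hf : Continuous f) (hf₀ : 0 ≤ f) : Integrable f μ := by
  have hbound : ∀ j, ∫⁻ x, ‖truncate f j x‖ₑ ∂μ ≤ ENNReal.ofReal (Λ f) := fun j => by
    rw [← ofReal_integral_norm_eq_lintegral_enorm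
      ((continuous_truncate hf j).integrable_of_hasCompactSupport (hasCompactSupport_truncate f j))]
    refine ENNReal.ofReal_le_ofReal ?_
    have htrunc₀ : 0 ≤ truncate f j := fun x => mul_nonneg (cutoff j).nonneg (hf₀ x)
    simp_rw [Real.norm_of_nonneg (htrunc₀ _)]
    rw [hμ _ (continuous_truncate hf j) (hasCompactSupport_truncate f j)]
    exact Λ.monotone fun x => mul_le_of_le_one_left (hf₀ x) (cutoff j).le_one
  exact integrable_of_tendsto (.of_forall (tendsto_truncate f))
    (fun j => (continuous_truncate hf j).aestronglyMeasurable)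
    (ne_top_of_le_ne_top ENNReal.ofReal_ne_top (liminf_le_of_frequently_le' (.of_forall hbound)))

theorem integrable_and_integral_eq_of_continuous
    (hμ : ∀ g : polyBounded, Continuous g → HasCompactSupport g → ∫ x, g x ∂μ = Λ g)
    {f : polyBounded} (hf : Continuous f) : Integrable f μ ∧ ∫ x, f x ∂μ = Λ f := by
  obtain ⟨q, hq⟩ := f.2
  have hq_int : Integrable (fun x => q.eval x) μ :=
    integrable_of_continuous_of_nonneg Λ hμ (f := evalPolyBounded q) q.continuous
      fun x => (abs_nonneg _).trans (hq x)
  refine ⟨hq_int.mono' hf.aestronglyMeasurable (.of_forall hq),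
    tendsto_nhds_unique ?_ (tendsto_apply_truncate Λ f)⟩
  simp_rw [← hμ _ (continuous_truncate hf _) (hasCompactSupport_truncate f _)]
  exact tendsto_integral_of_dominated_convergence _
    (fun j => (continuous_truncate hf j).aestronglyMeasurable) hq_int
    (fun j => .of_forall fun x => (abs_truncate_le f j x).trans (hq x))
    (.of_forall (tendsto_truncate f))

end Integration

noncomputable def compactlySupportedToPolyBounded : C_c(ℝ, ℝ) →ₚ[ℝ] polyBounded :=
  .mk₀
    { toFun g := ⟨g, by
        obtain ⟨c, hc⟩ := g.continuous.bounded_above_of_compact_support g.hasCompactSupport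
        exact ⟨C c, by simpa using hc⟩⟩
      map_add' _ _ := rfl
      map_smul' _ _ := rfl }
    fun _ hg => hg

theorem exists_isRadon_hasMomentSequence {s : ℕ → ℝ} (hs : ∀ n, (hankel s n).PosSemidef) :
    ∃ μ : Measure ℝ, IsRadon μ ∧ HasMomentSequence μ s := by
  obtain ⟨Λ, hΛ⟩ := exists_positiveLinearMap_polyBounded_extension (momentFunctional s)
    fun _ => momentFunctional_nonneg ((hankel_posSemidef_iff s).1 hs)
  let μ := RealRMK.rieszMeasure (Λ.comp compactlySupportedToPolyBounded)
  have hμ : ∀ g : polyBounded, Continuous g → HasCompactSupport g → ∫ x, g x ∂μ = Λ g :=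
    fun g hg hg' => RealRMK.integral_rieszMeasure _ ⟨⟨g, hg⟩, hg'⟩
  refine ⟨μ, ⟨inferInstance, inferInstance⟩, fun n => ?_⟩
  simpa [hΛ, momentFunctional_X_pow, eq_comm] using
    integrable_and_integral_eq_of_continuous Λ hμ (f := evalPolyBounded (X ^ n)) (X ^ n).continuous

end Hamburger

/-- Hamburger's theorem: a real sequence is a moment sequence of a Radon measure on `ℝ`
iff all its Hankel matrices are positive semidefinite. -/
theorem hamburger (s : ℕ → ℝ) :
    (∃ μ : Measure ℝ, IsRadon μ ∧
      ∀ n : ℕ, Integrable (fun x : ℝ => x ^ n) μ ∧ s n = ∫ x : ℝ, x ^ n ∂μ) ↔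
    (∀ n : ℕ, Matrix.PosSemidef (Matrix.of fun i j : Fin (n + 1) => s ((i : ℕ) + (j : ℕ)))) :=
  ⟨fun ⟨_, _, hμ⟩ => Hamburger.HasMomentSequence.hankel_posSemidef hμ,
    Hamburger.exists_isRadon_hasMomentSequence⟩
end

section
/- Richter–Tchakaloff theorem: Let (Y, 𝒜, μ) be a measure space and let V be a finite-dimensional linear space of μ-integrable measurable real-valued functions on Y. Then there exist k ∈ ℕ₀ with k ≤ dim V, pairwise distinct points x₁,…,x_k ∈ Y and positive real numbers m₁,…,m_k such that ∫_Y f dμ = ∑_{j=1}^k m_j f(x_j) for every f ∈ V. -/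
/-!
Evaluate a basis of `V` to get `g : Y → ℝⁿ`. The integral `∫ g dμ` lies in the convex cone
spanned by the values of `g`: otherwise a functional `φ` supporting that cone is `≤ 0` on the
values and `≥ 0` on the integral, so `φ ∘ g = 0` a.e. and induction on the dimension of the span
applies to the values in `ker φ`. Carathéodory's theorem for cones then writes `∫ g dμ` as a
positive combination of linearly independent values `g xⱼ`; linear independence bounds their
number by `dim V` and forces the `xⱼ` to be distinct.
-/

open MeasureTheory Finset Module Submodule

namespace PointedCone

section Caratheodory

variable {𝕜 E : Type*} [Field 𝕜] [LinearOrder 𝕜] [IsStrictOrderedRing 𝕜] [AddCommGroup E]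
  [Module 𝕜 E]

lemma mem_hull_finset_iff {t : Finset E} {x : E} :
    x ∈ hull 𝕜 (t : Set E) ↔ ∃ w : E → 𝕜, (∀ e ∈ t, 0 ≤ w e) ∧ ∑ e ∈ t, w e • e = x := by
  refine ⟨fun hx => ?_, ?_⟩
  · obtain ⟨f, -, rfl⟩ := mem_span_finset.1 hx
    exact ⟨fun e => f e, fun e _ => (f e).2, rfl⟩
  · rintro ⟨w, hw, rfl⟩
    exact sum_mem fun e he => (hull 𝕜 _).smul_mem (hw e he) (subset_hull he)

lemma mem_hull_erase [DecidableEq E] {t : Finset E} (ht : ¬LinearIndepOn 𝕜 id (t : Set E))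
    {x : E} (hx : x ∈ hull 𝕜 (t : Set E)) : ∃ y ∈ t, x ∈ hull 𝕜 (t.erase y : Set E) := by
  obtain ⟨w, hw, rfl⟩ := mem_hull_finset_iff.1 hx
  obtain ⟨c, hc, hpos⟩ : ∃ c : E → 𝕜, ∑ e ∈ t, c e • e = 0 ∧ ∃ e ∈ t, 0 < c e := by
    obtain ⟨c, hc, i, hi, hci⟩ := not_linearIndepOn_finset_iff.1 ht
    rcases hci.lt_or_gt with hneg | hpos
    · exact ⟨-c, by simpa [neg_smul] using hc, i, hi, by simpa using hneg⟩
    · exact ⟨c, hc, i, hi, hpos⟩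
  obtain ⟨y, hy, hmin⟩ := (t.filter (0 < c ·)).exists_min_image (fun e => w e / c e)
    (let ⟨e, he, hce⟩ := hpos; ⟨e, mem_filter.2 ⟨he, hce⟩⟩)
  obtain ⟨hyt, hcy⟩ := mem_filter.1 hy
  -- subtracting `τ • ∑ c e • e = 0` with the largest admissible `τ` kills the weight at `y`
  set τ := w y / c y
  have hτ : 0 ≤ τ := div_nonneg (hw y hyt) hcy.le
  refine ⟨y, hyt, mem_hull_finset_iff.2 ⟨fun e => w e - τ * c e, fun e he => ?_, ?_⟩⟩
  · have het := mem_of_mem_erase he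
    rcases le_or_gt (c e) 0 with hce | hce
    · nlinarith [hw e het]
    · have := (le_div_iff₀ hce).1 (hmin e (mem_filter.2 ⟨het, hce⟩))
      linarith
  · have hy0 : (w y - τ * c y) • y = 0 := by simp [τ, hcy.ne']
    rw [sum_erase (f := fun e => (w e - τ * c e) • e) t hy0]
    simp only [sub_smul, mul_smul, sum_sub_distrib, ← smul_sum, hc, smul_zero, sub_zero]

lemma exists_linearIndepOn_subset_of_mem_hull_finset (t : Finset E) {x : E}
    (hx : x ∈ hull 𝕜 (t : Set E)) :
    ∃ u ⊆ t, LinearIndepOn 𝕜 id (u : Set E) ∧ x ∈ hull 𝕜 (u : Set E) := by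
  classical
  induction t using Finset.strongInduction with
  | H t ih =>
    by_cases ht : LinearIndepOn 𝕜 id (t : Set E)
    · exact ⟨t, subset_rfl, ht, hx⟩
    obtain ⟨y, hy, hxy⟩ := mem_hull_erase ht hx
    obtain ⟨u, hu, hli, hxu⟩ := ih _ (erase_ssubset hy) hxy
    exact ⟨u, hu.trans (erase_subset _ _), hli, hxu⟩

theorem exists_linearIndependent_pos_sum_eq_of_mem_hull {s : Set E} {x : E}
    (hx : x ∈ hull 𝕜 s) :
    ∃ (k : ℕ) (v : Fin k → E) (w : Fin k → 𝕜), (∀ j, v j ∈ s) ∧ LinearIndependent 𝕜 v ∧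
      (∀ j, 0 < w j) ∧ ∑ j, w j • v j = x := by
  obtain ⟨T, hTs, hxT⟩ := mem_span_finite_of_mem_span hx
  obtain ⟨u, huT, hli, hxu⟩ := exists_linearIndepOn_subset_of_mem_hull_finset T hxT
  obtain ⟨w, hw, rfl⟩ := mem_hull_finset_iff.1 hxu
  set u' := u.filter (fun e => 0 < w e)
  have hu'u : u' ⊆ u := filter_subset _ _
  let e := u'.equivFin
  refine ⟨u'.card, fun j => e.symm j, fun j => w (e.symm j),
    fun j => hTs (huT (hu'u (e.symm j).2)), ?_, fun j => (mem_filter.1 (e.symm j).2).2, ?_⟩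
  · exact (hli.mono (coe_subset.2 hu'u)).comp e.symm e.symm.injective
  · rw [e.symm.sum_comp (fun x : u' => w x • (x : E)), sum_coe_sort u' fun x => w x • x]
    exact sum_filter_of_ne fun x hx hne => lt_of_le_of_ne (hw x hx) fun h => hne (by simp [← h])

end Caratheodory

section Separation

variable {E : Type*} [NormedAddCommGroup E] [NormedSpace ℝ E] [FiniteDimensional ℝ E]

lemma exists_ne_zero_nonpos_of_notMem (C : PointedCone ℝ E)
    (hC : span ℝ (C : Set E) = ⊤) {x : E} (hx : x ∉ C) :
    ∃ φ : StrongDual ℝ E, φ ≠ 0 ∧ (∀ y ∈ C, φ y ≤ 0) ∧ 0 ≤ φ x := by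
  have hint : (interior (C : Set E)).Nonempty := by
    refine C.convex.interior_nonempty_iff_affineSpan_eq_top.2 ?_
    rw [AffineSubspace.affineSpan_eq_top_iff_vectorSpan_eq_top_of_nonempty ℝ E E ⟨0, C.zero_mem⟩,
      vectorSpan_eq_span_vsub_set_right ℝ C.zero_mem]
    simpa [vsub_eq_sub] using hC
  obtain ⟨φ, u, hφ, hle, hge⟩ := geometric_hahn_banach_of_nonempty_interior C.convex
    (convex_singleton x) (Set.disjoint_singleton_right.2 fun h => hx (interior_subset h)) hint
    (Set.singleton_nonempty x)
  have hu : 0 ≤ u := by simpa using hle 0 C.zero_mem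
  refine ⟨φ, hφ, fun y hy => ?_, hu.trans (hge x rfl)⟩
  by_contra! hφy
  -- a cone is invariant under scaling, so `φ` cannot be bounded above on it unless `φ ≤ 0`
  have := hle (((u + 1) / φ y) • y) (C.smul_mem (by positivity) hy)
  rw [map_smul, smul_eq_mul, div_mul_cancel₀ _ hφy.ne'] at this
  linarith

lemma exists_nonpos_of_mem_span_of_notMem_hull {s : Set E} {x : E} (hxs : x ∈ span ℝ s)
    (hx : x ∉ hull ℝ s) :
    ∃ φ : StrongDual ℝ E, (∀ y ∈ s, φ y ≤ 0) ∧ 0 ≤ φ x ∧ ∃ y ∈ s, φ y ≠ 0 := by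
  obtain ⟨W, hW⟩ := (span ℝ s).exists_isCompl
  -- adding a complement of `span ℝ s` makes the cone full-dimensional without capturing `x`
  set C : PointedCone ℝ E := hull ℝ s ⊔ (W : PointedCone ℝ E)
  have hsC : s ⊆ C := subset_hull.trans (le_sup_left (a := hull ℝ s))
  have hWC : (W : Set E) ⊆ C := le_sup_right (a := hull ℝ s) (b := (W : PointedCone ℝ E))
  have hCspan : span ℝ (C : Set E) = ⊤ := by
    rw [eq_top_iff, ← hW.sup_eq_top]
    exact sup_le (span_le.2 (hsC.trans Submodule.subset_span)) fun w hw =>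
      Submodule.subset_span (hWC hw)
  have hxC : x ∉ C := by
    rintro hxC
    obtain ⟨a, ha, b, hb, rfl⟩ := mem_sup.1 hxC
    have hbs : b ∈ span ℝ s := by
      simpa using sub_mem hxs (hull_le_span ℝ s ha)
    have hb0 : b = 0 := (mem_bot ℝ).1 (hW.inf_eq_bot ▸ mem_inf.2 ⟨hbs, hb⟩)
    exact hx (by simpa [hb0] using ha)
  obtain ⟨φ, hφ0, hφC, hφx⟩ := exists_ne_zero_nonpos_of_notMem C hCspan hxC
  refine ⟨φ, fun y hy => hφC y (hsC hy), hφx, ?_⟩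
  by_contra! hφs
  have hφW : ∀ w ∈ W, φ w = 0 := fun w hw =>
    le_antisymm (hφC w (hWC hw)) (by simpa using hφC (-w) (hWC (neg_mem hw)))
  apply hφ0
  have hker : span ℝ s ⊔ W ≤ LinearMap.ker (φ : E →ₗ[ℝ] ℝ) :=
    sup_le (span_le.2 hφs) hφW
  rw [hW.sup_eq_top, top_le_iff, LinearMap.ker_eq_top] at hker
  exact ContinuousLinearMap.coe_injective hker

end Separation

end PointedCone

namespace MeasureTheory

variable {Y E : Type*} [MeasurableSpace Y] {μ : Measure Y} [NormedAddCommGroup E]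
  [NormedSpace ℝ E] [FiniteDimensional ℝ E] {g : Y → E}

lemma integral_mem_of_ae_mem_submodule (hg : Integrable g μ) {K : Submodule ℝ E}
    (hK : ∀ᵐ y ∂μ, g y ∈ K) : ∫ y, g y ∂μ ∈ K := by
  by_contra h
  obtain ⟨f, hf, hfK⟩ := K.exists_dual_map_eq_bot_of_notMem h inferInstance
  let φ : StrongDual ℝ E := LinearMap.toContinuousLinearMap f
  have hφK : ∀ x ∈ K, φ x = 0 := fun x hx => LinearMap.le_ker_iff_map.2 hfK hx
  apply hf
  calc f (∫ y, g y ∂μ) = ∫ y, φ (g y) ∂μ := (φ.integral_comp_comm hg).symm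
    _ = 0 := integral_eq_zero_of_ae (hK.mono fun y hy => hφK _ hy)

theorem integral_mem_hull_of_ae_mem (hg : Integrable g μ) {s : Set E}
    (hs : ∀ᵐ y ∂μ, g y ∈ s) : ∫ y, g y ∂μ ∈ PointedCone.hull ℝ s := by
  induction hn : finrank ℝ (span ℝ s) using Nat.strong_induction_on generalizing s with
  | _ n ih =>
  by_contra hL
  obtain ⟨φ, hφs, hφL, y₀, hy₀s, hφy₀⟩ := PointedCone.exists_nonpos_of_mem_span_of_notMem_hull
    (integral_mem_of_ae_mem_submodule hg (hs.mono fun y hy => subset_span hy)) hL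
  -- `φ ∘ g ≤ 0` a.e. while `∫ φ ∘ g = φ (∫ g) ≥ 0`, so `g` lives a.e. in the face `s ∩ ker φ`
  have hφg : ∀ᵐ y ∂μ, φ (g y) = 0 := by
    have hnonneg : 0 ≤ᵐ[μ] fun y => -φ (g y) := hs.mono fun y hy => neg_nonneg.2 (hφs _ hy)
    have hzero : ∫ y, -φ (g y) ∂μ = 0 := by
      refine le_antisymm ?_ (integral_nonneg_of_ae hnonneg)
      rw [integral_neg, φ.integral_comp_comm hg]
      linarith
    filter_upwards [(integral_eq_zero_iff_of_nonneg_ae hnonneg (φ.integrable_comp hg).neg).1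
      hzero] with y hy
    simpa using hy
  set s' := {x ∈ s | φ x = 0}
  have hlt : span ℝ s' < span ℝ s := by
    refine (span_mono fun x hx => hx.1).lt_of_ne fun heq => hφy₀ ?_
    have hy₀ : y₀ ∈ span ℝ s' := heq ▸ subset_span hy₀s
    exact span_le (p := LinearMap.ker (φ : E →ₗ[ℝ] ℝ)).2 (fun x hx => hx.2) hy₀
  have := ih _ (hn ▸ finrank_lt_finrank_of_lt hlt) (hs.and hφg) rfl
  exact hL (span_mono (fun x hx => hx.1) this)

theorem Integrable.exists_integral_eq_sum_smul (hg : Integrable g μ) :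
    ∃ (k : ℕ) (x : Fin k → Y) (m : Fin k → ℝ), LinearIndependent ℝ (g ∘ x) ∧ (∀ j, 0 < m j) ∧
      ∫ y, g y ∂μ = ∑ j, m j • g (x j) := by
  obtain ⟨k, v, m, hv, hli, hm, hsum⟩ := PointedCone.exists_linearIndependent_pos_sum_eq_of_mem_hull
    (integral_mem_hull_of_ae_mem hg (ae_of_all _ Set.mem_range_self))
  choose x hx using hv
  have hgx : g ∘ x = v := funext hx
  exact ⟨k, x, m, hgx ▸ hli, hm, by simp [hx, hsum]⟩

end MeasureTheory

theorem richter_tchakaloff_general {Y : Type*} [MeasurableSpace Y] (μ : Measure Y)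
    (V : Submodule ℝ (Y → ℝ)) [FiniteDimensional ℝ V]
    (hint : ∀ f ∈ V, Integrable f μ) :
    ∃ (k : ℕ), k ≤ Module.finrank ℝ V ∧
      ∃ (x : Fin k → Y) (m : Fin k → ℝ), Function.Injective x ∧ (∀ j, 0 < m j) ∧
        ∀ f ∈ V, ∫ y, f y ∂μ = ∑ j, m j * f (x j) := by
  let b := Module.finBasis ℝ V
  let g : Y → (Fin (finrank ℝ V) → ℝ) := fun y i => (b i : Y → ℝ) y
  have hg : Integrable g μ := integrable_pi_iff.2 fun i => hint _ (b i).2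
  have hfactor : ∀ f ∈ V, ∃ ℓ : StrongDual ℝ (Fin (finrank ℝ V) → ℝ), ∀ y, f y = ℓ (g y) := by
    intro f hf
    refine ⟨∑ i, b.repr ⟨f, hf⟩ i • ContinuousLinearMap.proj i, fun y => ?_⟩
    have := congrArg (fun u : V => (u : Y → ℝ) y) (b.sum_repr ⟨f, hf⟩)
    simp only [Submodule.coe_sum, Submodule.coe_smul, Finset.sum_apply, Pi.smul_apply,
      smul_eq_mul] at this
    simp [g, this]
  obtain ⟨k, x, m, hli, hm, hsum⟩ := hg.exists_integral_eq_sum_smul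
  refine ⟨k, by simpa using hli.fintype_card_le_finrank, x, m, hli.injective.of_comp, hm,
    fun f hf => ?_⟩
  obtain ⟨ℓ, hℓ⟩ := hfactor f hf
  simp only [hℓ, ℓ.integral_comp_comm hg, hsum, map_sum, map_smul, smul_eq_mul]

/-- Richter–Tchakaloff theorem: every integral functional on a finite-dimensional space of
integrable functions is given by a finitely atomic measure with at most `dim V` atoms. -/
theorem richter_tchakaloff {Y : Type*} [MeasurableSpace Y] (μ : Measure Y)
    (V : Submodule ℝ (Y → ℝ)) [FiniteDimensional ℝ V]
    (hmeas : ∀ f ∈ V, Measurable f) (hint : ∀ f ∈ V, Integrable f μ) :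
    ∃ (k : ℕ), k ≤ Module.finrank ℝ V ∧
      ∃ (x : Fin k → Y) (m : Fin k → ℝ), Function.Injective x ∧ (∀ j, 0 < m j) ∧
        ∀ f ∈ V, ∫ y, f y ∂μ = ∑ j, m j * f (x j) :=
  richter_tchakaloff_general μ V hint
end

section
/- Stochel's theorem: Let K be a closed subset of ℝ^d and let L be a linear functional on ℝ[x₁,…,x_d]. Suppose that for each n ∈ ℕ there exists a Radon measure μ_n on ℝ^d supported on K such that every polynomial of degree at most 2n is μ_n-integrable and L(p) = ∫ p dμ_n for all p ∈ ℝ[x₁,…,x_d] with deg p ≤ 2n. Then L is a K-moment functional: there exists a Radon measure μ on ℝ^d supported on K such that every polynomial is μ-integrable and L(p) = ∫ p dμ for all p ∈ ℝ[x₁,…,x_d]. -/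
/-!
The truncated representing measures `μₙ` all have mass `L 1`, so along an ultrafilter finer
than `atTop` the integrals `∫ f dμₙ` of every `f ∈ C_c(ℝ^d)` converge; the limit is a positive
linear functional on `C_c(ℝ^d)`, and the Riesz–Markov–Kakutani theorem represents it by a
regular measure `μ`, which is still supported on the closed set `K`. Passing from compactly
supported functions to a polynomial `p²` costs a tail term: outside the ball of radius `R`,
`p² ≤ p² ‖x‖² / R²`, and `∫ p² ‖x‖² dμₙ` is bounded by the moment `L (p² ∑ Xᵢ²)` for large `n`.
Hence `∫ p² dμ = L (p²)`, and every polynomial is a difference of two squares up to a factor.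
-/

open MeasureTheory

open Filter Topology Set
open scoped ENNReal CompactlySupported

section UltralimitOfIntegrals

variable {X : Type*} [TopologicalSpace X] [MeasurableSpace X] {ι : Type*}

theorem exists_tendsto_integral_of_measureReal_univ_le (U : Ultrafilter ι)
    {ν : ι → Measure X} [∀ i, IsFiniteMeasure (ν i)] {m : ℝ} (hν : ∀ i, (ν i).real univ ≤ m)
    (f : C_c(X, ℝ)) : ∃ a, Tendsto (fun i => ∫ x, f x ∂ν i) U (𝓝 a) := by
  obtain ⟨C, hC⟩ := f.continuous.bounded_above_of_compact_support f.hasCompactSupport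
  have hbound : ∀ i, ∫ x, f x ∂ν i ∈ Icc (-(max C 0 * m)) (max C 0 * m) := fun i => by
    rw [mem_Icc, ← abs_le, ← Real.norm_eq_abs]
    calc ‖∫ x, f x ∂ν i‖ ≤ max C 0 * (ν i).real univ :=
          norm_integral_le_of_norm_le_const (.of_forall fun x => (hC x).trans (le_max_left _ _))
      _ ≤ max C 0 * m := mul_le_mul_of_nonneg_left (hν i) (le_max_right _ _)
  obtain ⟨a, -, ha⟩ := isCompact_Icc.ultrafilter_le_nhds (U.map _)
    (le_principal_iff.2 (Ultrafilter.mem_map.2 (univ_mem' hbound)))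
  exact ⟨a, ha⟩

theorem exists_regular_tendsto_integral [T2Space X] [LocallyCompactSpace X] [BorelSpace X]
    (U : Ultrafilter ι) {ν : ι → Measure X} [∀ i, IsFiniteMeasure (ν i)] {m : ℝ}
    (hν : ∀ i, (ν i).real univ ≤ m) :
    ∃ μ : Measure X, μ.Regular ∧
      ∀ f : C_c(X, ℝ), Tendsto (fun i => ∫ x, f x ∂ν i) U (𝓝 (∫ x, f x ∂μ)) := by
  choose Λ hΛ using exists_tendsto_integral_of_measureReal_univ_le U hν
  let Λ' : C_c(X, ℝ) →ₚ[ℝ] ℝ :=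
  { toFun := Λ
    map_add' f g := tendsto_nhds_unique (hΛ (f + g)) <| by
      simpa only [CompactlySupportedContinuousMap.coe_add, Pi.add_apply,
        integral_add f.integrable g.integrable] using (hΛ f).add (hΛ g)
    map_smul' c f := tendsto_nhds_unique (hΛ (c • f)) <| by
      simpa only [CompactlySupportedContinuousMap.coe_smul, Pi.smul_apply, integral_smul,
        RingHom.id_apply] using (hΛ f).const_smul c
    monotone' f g hfg := le_of_tendsto_of_tendsto' (hΛ f) (hΛ g) fun i =>
      integral_mono f.integrable g.integrable hfg }
  exact ⟨RealRMK.rieszMeasure Λ', inferInstance, fun f => by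
    rw [RealRMK.integral_rieszMeasure]
    exact hΛ f⟩

end UltralimitOfIntegrals

theorem MeasureTheory.Measure.measure_isOpen_le_of_forall_integral_le
    {X : Type*} [TopologicalSpace X] [T2Space X] [LocallyCompactSpace X] [MeasurableSpace X]
    [BorelSpace X] (μ : Measure X) [μ.Regular] {V : Set X} (hV : IsOpen V) {b : ℝ}
    (h : ∀ f : C_c(X, ℝ), (∀ x, f x ∈ Icc 0 1) → tsupport f ⊆ V → ∫ x, f x ∂μ ≤ b) :
    μ V ≤ ENNReal.ofReal b := by
  rw [hV.measure_eq_iSup_isCompact]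
  refine iSup₂_le fun C hCV => iSup_le fun hC => ?_
  obtain ⟨f, hfC, hf, hfV, hf01⟩ := exists_continuousMap_one_of_isCompact_subset_isOpen hC hV hCV
  let g : C_c(X, ℝ) := ⟨f, hf⟩
  calc μ C = ∫⁻ x, C.indicator 1 x ∂μ := (lintegral_indicator_one hC.measurableSet).symm
    _ ≤ ∫⁻ x, ENNReal.ofReal (g x) ∂μ := lintegral_mono fun x => by
        by_cases hx : x ∈ C
        · rw [indicator_of_mem hx, Pi.one_apply, show g x = 1 from hfC hx, ENNReal.ofReal_one]
        · simp [hx]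
    _ = ENNReal.ofReal (∫ x, g x ∂μ) :=
        (ofReal_integral_eq_lintegral_ofReal g.integrable (.of_forall fun x => (hf01 x).1)).symm
    _ ≤ ENNReal.ofReal b := ENNReal.ofReal_le_ofReal (h g hf01 hfV)

section RadialCutoff

variable {E : Type*} [NormedAddCommGroup E]

noncomputable def radialCutoff (R : ℝ) (x : E) : ℝ := max 0 (min 1 (2 - ‖x‖ / R))

theorem continuous_radialCutoff (R : ℝ) : Continuous (radialCutoff (E := E) R) := by
  unfold radialCutoff
  fun_prop

theorem radialCutoff_nonneg (R : ℝ) (x : E) : 0 ≤ radialCutoff R x := le_max_left _ _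

theorem radialCutoff_le_one (R : ℝ) (x : E) : radialCutoff R x ≤ 1 :=
  max_le zero_le_one (min_le_left _ _)

theorem radialCutoff_of_norm_le {R : ℝ} (hR : 0 < R) {x : E} (hx : ‖x‖ ≤ R) :
    radialCutoff R x = 1 := by
  have : 1 ≤ 2 - ‖x‖ / R := by rw [le_sub_comm, div_le_iff₀ hR]; linarith
  rw [radialCutoff, min_eq_left this, max_eq_right zero_le_one]

theorem radialCutoff_of_le_norm {R : ℝ} (hR : 0 < R) {x : E} (hx : 2 * R ≤ ‖x‖) :
    radialCutoff R x = 0 := by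
  have : 2 - ‖x‖ / R ≤ 0 := by rw [sub_nonpos, le_div_iff₀ hR]; linarith
  rw [radialCutoff, min_eq_right (this.trans zero_le_one), max_eq_left this]

theorem radialCutoff_mono {R R' : ℝ} (hR : 0 < R) (h : R ≤ R') (x : E) :
    radialCutoff R x ≤ radialCutoff R' x := by
  unfold radialCutoff
  gcongr

theorem hasCompactSupport_radialCutoff [ProperSpace E] {R : ℝ} (hR : 0 < R) :
    HasCompactSupport (radialCutoff (E := E) R) :=
  .intro (isCompact_closedBall 0 (2 * R)) fun x hx =>
    radialCutoff_of_le_norm hR (le_of_lt (by simpa using hx))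

theorem le_mul_radialCutoff_add_div {R : ℝ} (hR : 0 < R) (x : E) {q w : ℝ} (hq : 0 ≤ q)
    (hqw : ‖x‖ ^ 2 * q ≤ w) : q ≤ q * radialCutoff R x + w / R ^ 2 := by
  by_cases hx : ‖x‖ ≤ R
  · have hw : 0 ≤ w := le_trans (by positivity) hqw
    rw [radialCutoff_of_norm_le hR hx, mul_one]
    linarith [div_nonneg hw (sq_nonneg R)]
  · have hRx : R ^ 2 ≤ ‖x‖ ^ 2 := pow_le_pow_left₀ hR.le (not_le.1 hx).le 2
    have : q ≤ w / R ^ 2 := by rw [le_div_iff₀ (by positivity)]; nlinarith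
    linarith [mul_nonneg hq (radialCutoff_nonneg R x)]

end RadialCutoff

section TailBound

variable {E : Type*} [NormedAddCommGroup E] [MeasurableSpace E] [OpensMeasurableSpace E]
  {q w : E → ℝ}

theorem integral_mul_radialCutoff_mem_Icc {ν : Measure E} {R : ℝ} (hR : 0 < R)
    (hq : Continuous q) (hq0 : ∀ x, 0 ≤ q x) (hqw : ∀ x, ‖x‖ ^ 2 * q x ≤ w x)
    (hqi : Integrable q ν) (hwi : Integrable w ν) :
    ∫ x, q x * radialCutoff R x ∂ν ∈ Icc (∫ x, q x ∂ν - (∫ x, w x ∂ν) / R ^ 2) (∫ x, q x ∂ν) := by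
  have hgi : Integrable (fun x => q x * radialCutoff R x) ν :=
    hqi.mono (hq.mul (continuous_radialCutoff R)).aestronglyMeasurable (.of_forall fun x => by
      simpa [abs_of_nonneg (hq0 x), abs_of_nonneg (radialCutoff_nonneg R x)] using
        mul_le_of_le_one_right (hq0 x) (radialCutoff_le_one R x))
  constructor
  · rw [sub_le_iff_le_add, ← integral_div, ← integral_add hgi (hwi.div_const _)]
    exact integral_mono hqi (hgi.add (hwi.div_const _)) fun x =>
      le_mul_radialCutoff_add_div hR x (hq0 x) (hqw x)
  · exact integral_mono hgi hqi fun x => mul_le_of_le_one_right (hq0 x) (radialCutoff_le_one R x)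

theorem integrable_and_integral_eq_of_tendsto_integral [ProperSpace E] {ι : Type*}
    {U : Filter ι} [U.NeBot] {μ : Measure E} [IsFiniteMeasureOnCompacts μ] {ν : ι → Measure E}
    (hlim : ∀ f : C_c(E, ℝ), Tendsto (fun i => ∫ x, f x ∂ν i) U (𝓝 (∫ x, f x ∂μ)))
    (hq : Continuous q) (hq0 : ∀ x, 0 ≤ q x) (hqw : ∀ x, ‖x‖ ^ 2 * q x ≤ w x) {a b : ℝ}
    (hqa : ∀ᶠ i in U, Integrable q (ν i) ∧ ∫ x, q x ∂ν i = a)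
    (hwb : ∀ᶠ i in U, Integrable w (ν i) ∧ ∫ x, w x ∂ν i ≤ b) :
    Integrable q μ ∧ ∫ x, q x ∂μ = a := by
  have hR (k : ℕ) : (0 : ℝ) < k + 1 := by positivity
  let g (k : ℕ) : C_c(E, ℝ) :=
    ⟨⟨fun x => q x * radialCutoff (k + 1) x, hq.mul (continuous_radialCutoff _)⟩,
      (hasCompactSupport_radialCutoff (hR k)).mul_left⟩
  have hg0 (k : ℕ) (x : E) : 0 ≤ g k x := mul_nonneg (hq0 x) (radialCutoff_nonneg _ x)
  have hg_bounds (k : ℕ) : ∫ x, g k x ∂μ ∈ Icc (a - b / (k + 1) ^ 2) a := by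
    refine isClosed_Icc.mem_of_tendsto (hlim (g k)) ?_
    filter_upwards [hqa, hwb] with i ⟨hqi, hqa⟩ ⟨hwi, hwb⟩
    refine Icc_subset_Icc_left ?_
      (hqa ▸ integral_mul_radialCutoff_mem_Icc (hR k) hq hq0 hqw hqi hwi)
    gcongr
  have ha : Tendsto (fun k : ℕ => ∫ x, g k x ∂μ) atTop (𝓝 a) := by
    refine tendsto_of_tendsto_of_tendsto_of_le_of_le ?_ tendsto_const_nhds
      (fun k => (hg_bounds k).1) (fun k => (hg_bounds k).2)
    simpa [div_eq_mul_inv] using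
      tendsto_const_nhds (x := a) |>.sub
        ((tendsto_one_div_add_atTop_nhds_zero_nat.pow 2).const_mul b)
  have hlintegral : ∫⁻ x, ENNReal.ofReal (q x) ∂μ = ENNReal.ofReal a := by
    refine tendsto_nhds_unique (lintegral_tendsto_of_tendsto_of_monotone
      (fun k => (g k).continuous.measurable.ennreal_ofReal.aemeasurable) ?_ ?_) ?_
    · refine .of_forall fun x k l hkl => ENNReal.ofReal_le_ofReal ?_
      exact mul_le_mul_of_nonneg_left (radialCutoff_mono (hR k) (by gcongr) x) (hq0 x)
    · refine .of_forall fun x => tendsto_const_nhds.congr' ?_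
      filter_upwards [eventually_ge_atTop ⌈‖x‖⌉₊] with k hk
      have hx : ‖x‖ ≤ k + 1 := (Nat.le_ceil _).trans (by exact_mod_cast hk.trans k.le_succ)
      simp [g, radialCutoff_of_norm_le (hR k) hx]
    · refine (ENNReal.tendsto_ofReal ha).congr fun k => ?_
      exact ofReal_integral_eq_lintegral_ofReal (g k).integrable (.of_forall (hg0 k))
  have ha0 : 0 ≤ a := by
    obtain ⟨i, -, rfl⟩ := hqa.exists
    exact integral_nonneg hq0
  have hqi : Integrable q μ :=
    ⟨hq.aestronglyMeasurable, by
      rw [hasFiniteIntegral_iff_ofReal (.of_forall hq0), hlintegral]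
      exact ENNReal.ofReal_lt_top⟩
  refine ⟨hqi, ?_⟩
  rw [integral_eq_lintegral_of_nonneg_ae (.of_forall hq0) hq.aestronglyMeasurable, hlintegral,
    ENNReal.toReal_ofReal ha0]

end TailBound

section Polynomial

open MvPolynomial

variable {σ : Type*}

theorem sq_norm_le_sum_sq [Fintype σ] (x : σ → ℝ) : ‖x‖ ^ 2 ≤ ∑ i, x i ^ 2 := by
  have hx : ‖x‖ ≤ √(∑ i, x i ^ 2) :=
    (pi_norm_le_iff_of_nonneg (Real.sqrt_nonneg _)).2 fun i => by
      rw [Real.norm_eq_abs]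
      exact Real.abs_le_sqrt
        (Finset.single_le_sum (fun j _ => sq_nonneg (x j)) (Finset.mem_univ i))
  calc ‖x‖ ^ 2 ≤ √(∑ i, x i ^ 2) ^ 2 := by gcongr
    _ = ∑ i, x i ^ 2 := Real.sq_sqrt (Finset.sum_nonneg fun i _ => sq_nonneg (x i))

theorem integrable_eval_and_eq_of_forall_sq {μ : Measure (σ → ℝ)}
    {L : MvPolynomial σ ℝ →ₗ[ℝ] ℝ}
    (h : ∀ p : MvPolynomial σ ℝ,
      Integrable (fun x => eval x (p ^ 2)) μ ∧ L (p ^ 2) = ∫ x, eval x (p ^ 2) ∂μ)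
    (p : MvPolynomial σ ℝ) : Integrable (fun x => eval x p) μ ∧ L p = ∫ x, eval x p ∂μ := by
  obtain ⟨hi₁, he₁⟩ := h (p + 1)
  obtain ⟨hi₂, he₂⟩ := h (p - 1)
  have heval (x : σ → ℝ) : eval x p = (eval x ((p + 1) ^ 2) - eval x ((p - 1) ^ 2)) / 4 := by
    simp only [map_pow, map_add, map_sub, map_one]
    ring
  have hL : L p = (L ((p + 1) ^ 2) - L ((p - 1) ^ 2)) / 4 := by
    rw [← map_sub, show (p + 1) ^ 2 - (p - 1) ^ 2 = (4 : ℝ) • p by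
      rw [smul_eq_C_mul, map_ofNat]; ring, map_smul, smul_eq_mul]
    ring
  simp_rw [heval]
  refine ⟨(hi₁.sub hi₂).div_const 4, ?_⟩
  rw [hL, integral_div, integral_sub hi₁ hi₂, he₁, he₂]

theorem integrable_eval_and_eq_of_tendsto_integral [Fintype σ] {ι : Type*} {U : Filter ι}
    [U.NeBot] {μ : Measure (σ → ℝ)} [IsFiniteMeasureOnCompacts μ] {ν : ι → Measure (σ → ℝ)}
    (hlim : ∀ f : C_c(σ → ℝ, ℝ), Tendsto (fun i => ∫ x, f x ∂ν i) U (𝓝 (∫ x, f x ∂μ)))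
    {L : MvPolynomial σ ℝ →ₗ[ℝ] ℝ}
    (hrep : ∀ p : MvPolynomial σ ℝ,
      ∀ᶠ i in U, Integrable (fun x => eval x p) (ν i) ∧ L p = ∫ x, eval x p ∂ν i)
    (p : MvPolynomial σ ℝ) : Integrable (fun x => eval x p) μ ∧ L p = ∫ x, eval x p ∂μ := by
  refine integrable_eval_and_eq_of_forall_sq (fun p => ?_) p
  have hqw (x : σ → ℝ) : ‖x‖ ^ 2 * eval x (p ^ 2) ≤ eval x (p ^ 2 * ∑ i, X i ^ 2) := by
    simp only [map_mul, map_pow, map_sum, eval_X, mul_comm (‖x‖ ^ 2)]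
    exact mul_le_mul_of_nonneg_left (sq_norm_le_sum_sq x) (sq_nonneg _)
  obtain ⟨hi, he⟩ := integrable_and_integral_eq_of_tendsto_integral hlim (continuous_eval _)
    (fun x => by simp only [map_pow]; positivity) hqw
    ((hrep _).mono fun i h => ⟨h.1, h.2.symm⟩) ((hrep _).mono fun i h => ⟨h.1, h.2.ge⟩)
  exact ⟨hi, he.symm⟩

end Polynomial

/-- Stochel's theorem: if for each `n` the restriction of `L` to polynomials of degree at
most `2n` has a representing measure supported on the closed set `K`, then `L` itself is a
`K`-moment functional. -/
theorem stochel (d : ℕ) (K : Set (Fin d → ℝ)) (hK : IsClosed K)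
    (L : MvPolynomial (Fin d) ℝ →ₗ[ℝ] ℝ)
    (htrunc : ∀ n : ℕ, ∃ μ : Measure (Fin d → ℝ), IsRadon μ ∧ μ Kᶜ = 0 ∧
      ∀ p : MvPolynomial (Fin d) ℝ, p.totalDegree ≤ 2 * n →
        Integrable (fun x => MvPolynomial.eval x p) μ ∧
        L p = ∫ x, MvPolynomial.eval x p ∂μ) :
    ∃ μ : Measure (Fin d → ℝ), IsRadon μ ∧ μ Kᶜ = 0 ∧
      ∀ p : MvPolynomial (Fin d) ℝ,
        Integrable (fun x => MvPolynomial.eval x p) μ ∧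
        L p = ∫ x, MvPolynomial.eval x p ∂μ := by
  choose ν _ hνK hν using htrunc
  have hrep (p : MvPolynomial (Fin d) ℝ) : ∀ᶠ n in atTop,
      Integrable (fun x => MvPolynomial.eval x p) (ν n) ∧ L p = ∫ x, MvPolynomial.eval x p ∂ν n :=
    (eventually_ge_atTop p.totalDegree).mono fun n hn => hν n p (by omega)
  have hfin (n : ℕ) : IsFiniteMeasure (ν n) :=
    (integrable_const_iff.1 (by simpa using (hν n 1 (by simp)).1)).resolve_left one_ne_zero
  have hmass (n : ℕ) : (ν n).real univ = L 1 := by simpa using (hν n 1 (by simp)).2.symm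
  obtain ⟨μ, hμ, hlim⟩ :=
    exists_regular_tendsto_integral (Ultrafilter.of atTop) fun n => (hmass n).le
  have hμK : μ Kᶜ = 0 := by
    simpa using μ.measure_isOpen_le_of_forall_integral_le hK.isOpen_compl (b := 0)
      fun f _ hfK => le_of_tendsto' (hlim f) fun n => le_of_eq <| integral_eq_zero_of_ae <|
        (measure_eq_zero_iff_ae_notMem.1 (hνK n)).mono fun x hx =>
          image_eq_zero_of_notMem_tsupport fun h => hx (hfK h)
  have hμuniv : μ univ ≤ ENNReal.ofReal (L 1) :=
    μ.measure_isOpen_le_of_forall_integral_le isOpen_univ fun f hf01 _ =>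
      le_of_tendsto' (hlim f) fun n => (hmass n).symm ▸ (integral_mono f.integrable
        (integrable_const 1) fun x => (hf01 x).2).trans (by simp)
  have : IsFiniteMeasure μ := ⟨hμuniv.trans_lt ENNReal.ofReal_lt_top⟩
  exact ⟨μ, ⟨inferInstance, inferInstance⟩, hμK,
    integrable_eval_and_eq_of_tendsto_integral hlim fun p => Ultrafilter.of_le _ (hrep p)⟩
end
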